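/- arXiv:1602.02565 — 11 statements merged into one kernel-verified Lean document; each statement's English description precedes it below -/
import Mathlib

section
/- Let f ∈ Z^2(N,A) be a 2-cocycle for the N-module A, and let \hat{N} = A ×_f N be the corresponding extension (with multiplication (a,n)(a',n') = (a + n.a' + f(n,n'), nn')). A pair (φ_A, φ_N) ∈ Aut(A) × Aut(N) lies in the image of Φ : Aut(\hat{N}, A) → Aut(A) × Aut(N) if and only if the cocycle (φ_A, φ_N).f, defined by ((φ_A,φ_N).f)(n,n') := φ_A(f(φ_N^{-1}(n), φ_N^{-1}(n'))), differs from f by a coboundary d_N h for some cochain h : N → A (where one also twists the module structure accordingly and requires it to be preserved). -/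
/-!
A morphism of the extension that restricts to `φA` on `A` and induces `φN` on `N` is forced to
have the shape `(a, n) ↦ (φA a · h(φN n), φN n)`, since `(a, n) = (a, 1)(1, n)`. For a map of this
shape, multiplicativity tested on `(1, n)(a, 1)` is the compatibility of `φA, φN` with the module
structure, and tested on `(1, n)(1, n')` it says that `(φA, φN).f` and `f` differ by `d_N h`;
conversely these two identities make the map multiplicative.
-/

/-- Multiplication of the extension `A ×_f N`: `(a,n)(a',n') = (a · S(n)(a') · f(n,n'), nn')`. -/
def extMul {A N : Type*} [CommGroup A] [Group N] (S : N →* MulAut A)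
    (f : N → N → A) (x y : A × N) : A × N :=
  (x.1 * S x.2 y.1 * f x.2 y.2, x.2 * y.2)

section

variable {A N : Type*} [CommGroup A] [Group N]

def extMap (φA : MulAut A) (φN : MulAut N) (h : N → A) (x : A × N) : A × N :=
  (φA x.1 * h (φN x.2), φN x.2)

theorem extMap_bijective (φA : MulAut A) (φN : MulAut N) (h : N → A) :
    Function.Bijective (extMap φA φN h) := by
  refine Function.bijective_iff_has_inverse.mpr
    ⟨fun y => (φA⁻¹ (y.1 * (h y.2)⁻¹), φN⁻¹ y.2), fun x => ?_, fun y => ?_⟩ <;>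
    simp [extMap]

variable (S : N →* MulAut A) (f : N → N → A)

theorem extMul_mk_one_one_mk (hf : ∀ n, f 1 n = 1) (a : A) (n : N) :
    extMul S f (a, 1) (1, n) = (a, n) := by
  simp [extMul, hf]

theorem exists_eq_extMap_of_map_extMul (hf : ∀ n, f 1 n = 1) {φA : MulAut A} {φN : MulAut N}
    {φ : A × N → A × N} (hmul : ∀ x y, φ (extMul S f x y) = extMul S f (φ x) (φ y))
    (hφA : ∀ a, (φ (a, 1)).1 = φA a) (hφN : ∀ x, (φ x).2 = φN x.2) :
    ∃ h : N → A, h 1 = 1 ∧ φ = extMap φA φN h := by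
  refine ⟨fun m => (φ (1, φN⁻¹ m)).1, by simp [hφA], ?_⟩
  have hφ1 : ∀ a, φ (a, 1) = (φA a, 1) := fun a => Prod.ext (hφA a) (by simp [hφN])
  funext ⟨a, n⟩
  calc φ (a, n) = extMul S f (φ (a, 1)) (φ (1, n)) := by
        rw [← hmul, extMul_mk_one_one_mk S f hf]
    _ = _ := by simp [extMul, extMap, hφ1, hφN, hf]

theorem module_compat_inv_iff {φA : MulAut A} {φN : MulAut N} :
    (∀ n a, φA (S (φN⁻¹ n) (φA⁻¹ a)) = S n a) ↔ ∀ n a, φA (S n a) = S (φN n) (φA a) :=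
  ⟨fun H n a => by simpa using H (φN n) (φA a),
    fun H n a => by simpa using H (φN⁻¹ n) (φA⁻¹ a)⟩

theorem twist_eq_mul_coboundary_iff {φA : MulAut A} {φN : MulAut N} {h : N → A} :
    (∀ n n', φA (f (φN⁻¹ n) (φN⁻¹ n')) = f n n' * (S n (h n') * (h (n * n'))⁻¹ * h n)) ↔
      ∀ n n', φA (f n n') * h (φN (n * n')) =
        h (φN n) * S (φN n) (h (φN n')) * f (φN n) (φN n') := by
  refine ⟨fun H n n' => ?_, fun H n n' => ?_⟩
  · have := H (φN n) (φN n')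
    simp only [MulAut.inv_apply_self] at this
    rw [this, map_mul]
    simp [mul_comm, mul_left_comm]
  · have := H (φN⁻¹ n) (φN⁻¹ n')
    simp only [MulAut.apply_inv_self, ← map_mul] at this
    rw [← mul_inv_eq_iff_eq_mul.mpr this.symm]
    simp [mul_comm, mul_left_comm]

theorem map_extMul_extMap_iff (hf : ∀ n, f n 1 = 1) {φA : MulAut A} {φN : MulAut N}
    {h : N → A} (h1 : h 1 = 1) :
    (∀ x y, extMap φA φN h (extMul S f x y) =
        extMul S f (extMap φA φN h x) (extMap φA φN h y)) ↔
      (∀ n a, φA (S n a) = S (φN n) (φA a)) ∧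
      (∀ n n', φA (f n n') * h (φN (n * n')) =
        h (φN n) * S (φN n) (h (φN n')) * f (φN n) (φN n')) := by
  constructor
  · intro hmul
    refine ⟨fun n a => ?_, fun n n' => ?_⟩
    · have := congrArg Prod.fst (hmul (1, n) (a, 1))
      simp only [extMul, extMap, one_mul, hf, mul_one, map_one, h1] at this
      exact mul_right_cancel (this.trans (mul_comm _ _))
    · simpa [extMul, extMap] using congrArg Prod.fst (hmul (1, n) (1, n'))
  · rintro ⟨hS, hcob⟩ ⟨a, n⟩ ⟨a', n'⟩
    refine Prod.ext ?_ (map_mul φN n n')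
    simp only [extMul, extMap, map_mul φA, map_mul (S (φN n)), mul_assoc, hcob, hS]
    simp only [mul_comm, mul_left_comm]

end

theorem stmt_1_general {A N : Type*} [CommGroup A] [Group N] (S : N →* MulAut A)
    (f : N → N → A)
    (hnorm : ∀ n, f 1 n = 1 ∧ f n 1 = 1)
    (φA : MulAut A) (φN : MulAut N) :
    (∃ φ : A × N → A × N, Function.Bijective φ ∧
        (∀ x y, φ (extMul S f x y) = extMul S f (φ x) (φ y)) ∧
        (∀ a : A, ∃ b : A, φ (a, (1 : N)) = (b, 1)) ∧
        (∀ a : A, (φ (a, (1 : N))).1 = φA a) ∧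
        (∀ x : A × N, (φ x).2 = φN x.2)) ↔
      (∃ h : N → A, h 1 = 1 ∧
        (∀ n a, φA (S (φN⁻¹ n) (φA⁻¹ a)) = S n a) ∧
        (∀ n n', φA (f (φN⁻¹ n) (φN⁻¹ n')) =
          f n n' * (S n (h n') * (h (n * n'))⁻¹ * h n))) := by
  constructor
  · rintro ⟨φ, -, hmul, -, hφA, hφN⟩
    obtain ⟨h, h1, rfl⟩ := exists_eq_extMap_of_map_extMul S f (fun n => (hnorm n).1) hmul hφA hφN
    rw [map_extMul_extMap_iff S f (fun n => (hnorm n).2) h1] at hmul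
    exact ⟨h, h1, (module_compat_inv_iff S).2 hmul.1, (twist_eq_mul_coboundary_iff S f).2 hmul.2⟩
  · rintro ⟨h, h1, hS, hcob⟩
    refine ⟨extMap φA φN h, extMap_bijective φA φN h,
      (map_extMul_extMap_iff S f (fun n => (hnorm n).2) h1).2
        ⟨(module_compat_inv_iff S).1 hS, (twist_eq_mul_coboundary_iff S f).1 hcob⟩,
      fun a => ⟨φA a, by simp [extMap, h1]⟩, fun a => by simp [extMap, h1], fun _ => rfl⟩

/-- `(φ_A, φ_N)` lies in the image of `Φ : Aut(Â,A) → Aut(A) × Aut(N)` iff the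
cocycle `(φ_A,φ_N).f` differs from `f` by a coboundary `d_N h` (with the twisted module
structure preserved). -/
theorem stmt_1 {A N : Type*} [CommGroup A] [Group N] (S : N →* MulAut A)
    (f : N → N → A)
    (hnorm : ∀ n, f 1 n = 1 ∧ f n 1 = 1)
    (hcoc : ∀ n n' n'', S n (f n' n'') * f n (n' * n'') = f (n * n') n'' * f n n')
    (φA : MulAut A) (φN : MulAut N) :
    (∃ φ : A × N → A × N, Function.Bijective φ ∧
        (∀ x y, φ (extMul S f x y) = extMul S f (φ x) (φ y)) ∧
        (∀ a : A, ∃ b : A, φ (a, (1 : N)) = (b, 1)) ∧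
        (∀ a : A, (φ (a, (1 : N))).1 = φA a) ∧
        (∀ x : A × N, (φ x).2 = φN x.2)) ↔
      (∃ h : N → A, h 1 = 1 ∧
        (∀ n a, φA (S (φN⁻¹ n) (φA⁻¹ a)) = S n a) ∧
        (∀ n n', φA (f (φN⁻¹ n) (φN⁻¹ n')) =
          f n n' * (S n (h n') * (h (n * n'))⁻¹ * h n))) :=
  stmt_1_general S f hnorm φA φN
end

section
/- Let f ∈ Z^2(N,A) and \hat{N} = A ×_f N. An automorphism φ ∈ Aut(\hat{N}, A) satisfies Φ(φ) = (φ_A, φ_N) if and only if it has the form φ(a,n) = (φ_A(a) + h(φ_N(n)), φ_N(n)) for some normalized cochain h : N → A with (φ_A, φ_N).(S,f) = (S, f + d_N h). -/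
namespace extMul

variable {A N : Type*} [CommGroup A] [Group N] {S : N →* MulAut A} {f : N → N → A}

theorem mk_one_mul_one_mk (hf : ∀ n, f 1 n = 1) (a : A) (n : N) :
    extMul S f (a, 1) (1, n) = (a, n) := by
  simp [extMul, hf]

variable {φ : A × N → A × N}

theorem apply_eq_of_map_mul (hmul : ∀ x y, φ (extMul S f x y) = extMul S f (φ x) (φ y))
    (hf : ∀ n, f 1 n = 1) {φA : A → A} {φN : N → N}
    (hA : ∀ a, φ (a, 1) = (φA a, 1)) (hN : ∀ x, (φ x).2 = φN x.2) (a : A) (n : N) :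
    φ (a, n) = (φA a * (φ (1, n)).1, φN n) := by
  rw [← mk_one_mul_one_mk hf a n, hmul, hA]
  simp [extMul, hf, hN]

variable {φA : MulAut A} {φN : MulAut N} {h : N → A}

theorem map_action_of_map_mul (hmul : ∀ x y, φ (extMul S f x y) = extMul S f (φ x) (φ y))
    (hφ : ∀ a n, φ (a, n) = (φA a * h (φN n), φN n)) (h1 : h 1 = 1) (hf : ∀ n, f n 1 = 1)
    (n : N) (a : A) :
    φA (S n a) = S (φN n) (φA a) := by
  have e := congrArg Prod.fst (hmul (1, n) (a, 1))
  simp only [extMul, map_one, one_mul, mul_one, hf, hφ, h1] at e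
  exact mul_right_cancel (e.trans (mul_comm _ _))

theorem map_cocycle_of_map_mul (hmul : ∀ x y, φ (extMul S f x y) = extMul S f (φ x) (φ y))
    (hφ : ∀ a n, φ (a, n) = (φA a * h (φN n), φN n)) (n n' : N) :
    φA (f n n') * h (φN n * φN n') = h (φN n) * S (φN n) (h (φN n')) * f (φN n) (φN n') := by
  have e := congrArg Prod.fst (hmul (1, n) (1, n'))
  simpa only [extMul, map_one, map_mul, one_mul, hφ] using e

end extMul

open extMul in
theorem stmt_2_general {A N : Type*} [CommGroup A] [Group N] (S : N →* MulAut A)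
    (f : N → N → A)
    (hnorm : ∀ n, f 1 n = 1 ∧ f n 1 = 1)
    (φA : MulAut A) (φN : MulAut N)
    (φ : A × N → A × N)
    (hmul : ∀ x y, φ (extMul S f x y) = extMul S f (φ x) (φ y)) :
    ((∀ a : A, φ (a, (1 : N)) = (φA a, 1)) ∧ (∀ x : A × N, (φ x).2 = φN x.2)) ↔
      (∃ h : N → A, h 1 = 1 ∧
        (∀ a n, φ (a, n) = (φA a * h (φN n), φN n)) ∧
        (∀ n a, φA (S (φN⁻¹ n) (φA⁻¹ a)) = S n a) ∧
        (∀ n n', φA (f (φN⁻¹ n) (φN⁻¹ n')) =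
          f n n' * (S n (h n') * (h (n * n'))⁻¹ * h n))) := by
  constructor
  · rintro ⟨hA, hN⟩
    set h : N → A := fun m => (φ (1, φN⁻¹ m)).1
    have hφ : ∀ a n, φ (a, n) = (φA a * h (φN n), φN n) := by
      simpa [h] using apply_eq_of_map_mul hmul (fun n => (hnorm n).1) hA hN
    have h1 : h 1 = 1 := by simp [h, hA]
    refine ⟨h, h1, hφ, fun n a => ?_, fun n n' => ?_⟩
    · simpa using map_action_of_map_mul hmul hφ h1 (fun n => (hnorm n).2) (φN⁻¹ n) (φA⁻¹ a)
    · have e := map_cocycle_of_map_mul hmul hφ (φN⁻¹ n) (φN⁻¹ n')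
      simp only [MulAut.apply_inv_self] at e
      rw [eq_mul_inv_of_mul_eq e]
      simp only [mul_comm, mul_left_comm]
  · rintro ⟨h, h1, hφ, -, -⟩
    exact ⟨fun a => by simp [hφ, h1], fun x => by simp [hφ]⟩

/-- an automorphism `φ` of `Â = A ×_f N` preserving `A` satisfies
`Φ(φ) = (φ_A, φ_N)` iff `φ(a,n) = (φ_A(a) · h(φ_N(n)), φ_N(n))` for a normalized cochain `h`
with `(φ_A,φ_N).(S,f) = (S, f · d_N h)`. -/
theorem stmt_2 {A N : Type*} [CommGroup A] [Group N] (S : N →* MulAut A)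
    (f : N → N → A)
    (hnorm : ∀ n, f 1 n = 1 ∧ f n 1 = 1)
    (hcoc : ∀ n n' n'', S n (f n' n'') * f n (n' * n'') = f (n * n') n'' * f n n')
    (φA : MulAut A) (φN : MulAut N)
    (φ : A × N → A × N)
    (hbij : Function.Bijective φ)
    (hmul : ∀ x y, φ (extMul S f x y) = extMul S f (φ x) (φ y))
    (hA : ∀ a : A, ∃ b : A, φ (a, (1 : N)) = (b, 1)) :
    ((∀ a : A, φ (a, (1 : N)) = (φA a, 1)) ∧ (∀ x : A × N, (φ x).2 = φN x.2)) ↔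
      (∃ h : N → A, h 1 = 1 ∧
        (∀ a n, φ (a, n) = (φA a * h (φN n), φN n)) ∧
        (∀ n a, φA (S (φN⁻¹ n) (φA⁻¹ a)) = S n a) ∧
        (∀ n n', φA (f (φN⁻¹ n) (φN⁻¹ n')) =
          f n n' * (S n (h n') * (h (n * n'))⁻¹ * h n))) :=
  stmt_2_general S f hnorm φA φN φ hmul
end

section
/- Let G be a group, N ⊴ G a normal subgroup, (A,S) a G-module, f ∈ Z^2(N,A) a 2-cocycle for the restricted N-action, and \hat{N} = A ×_f N. Suppose θ assigns to each g ∈ G a cochain θ(g) : N → A with d_N(θ(g)) = g.f − f, where (g.f)(n,n') := S(g)(f(g^{-1}ng, g^{-1}n'g)). Then for each g ∈ G the map \hat{ψ}_θ(g) : \hat{N} → \hat{N}, (a,n) ↦ (S(g)(a) + θ(g)(gng^{-1}), gng^{-1}) is an automorphism of \hat{N} preserving A, with inverse (a,n) ↦ (S(g^{-1})(a) − (g^{-1}.θ(g))(g^{-1}ng), g^{-1}ng). -/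
/-!
Conjugation by `g` carries the product `(a,n)(a',n') = (a · S(n)a' · f(n,n'), nn')` to one
whose cocycle term is `g.f(gng⁻¹, gn'g⁻¹)`, and `θ(g)` is exactly the correction turning `g.f`
back into `f`: the condition `d_N θ(g) = g.f − f` is the equality of the first coordinates of
`ψ̂(xy)` and `ψ̂(x)ψ̂(y)`.
-/

section ConjOnSubgroup

variable {Nn G : Type*} [Group Nn] [Group G] {ι : Nn →* G} {conj : G → Nn → Nn}

theorem conj_one_of_injective (hι : Function.Injective ι)
    (hconj : ∀ g m, ι (conj g m) = g * ι m * g⁻¹) (g : G) : conj g 1 = 1 :=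
  hι (by simp [hconj])

theorem conj_mul_of_injective (hι : Function.Injective ι)
    (hconj : ∀ g m, ι (conj g m) = g * ι m * g⁻¹) (g : G) (m m' : Nn) :
    conj g (m * m') = conj g m * conj g m' :=
  hι (by simp only [hconj, map_mul]; group)

theorem conj_inv_conj_of_injective (hι : Function.Injective ι)
    (hconj : ∀ g m, ι (conj g m) = g * ι m * g⁻¹) (g : G) (m : Nn) :
    conj g⁻¹ (conj g m) = m :=
  hι (by simp only [hconj]; group)

theorem conj_conj_inv_of_injective (hι : Function.Injective ι)
    (hconj : ∀ g m, ι (conj g m) = g * ι m * g⁻¹) (g : G) (m : Nn) :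
    conj g (conj g⁻¹ m) = m :=
  hι (by simp only [hconj]; group)

end ConjOnSubgroup

theorem MonoidHom.mulAut_apply_comm_of_conj {M G : Type*} [Mul M] [Group G]
    (S : G →* MulAut M) {g h k : G} (hk : k = g * h * g⁻¹) (m : M) :
    S k (S g m) = S g (S h m) := by
  show (S k * S g) m = (S g * S h) m
  rw [← map_mul, ← map_mul, hk, inv_mul_cancel_right]

section TwistedConj

variable {A Nn G : Type*} [CommGroup A] [Group Nn] [Group G]

/-- The map `ψ̂_θ(g)`. -/
def twistedConj (S : G →* MulAut A) (conj : G → Nn → Nn) (θ : G → Nn → A) (g : G)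
    (z : A × Nn) : A × Nn :=
  (S g z.1 * θ g (conj g z.2), conj g z.2)

theorem twistedConj_extMul (S : G →* MulAut A) {ι : Nn →* G} (hι : Function.Injective ι)
    {conj : G → Nn → Nn} (hconj : ∀ g m, ι (conj g m) = g * ι m * g⁻¹) (f : Nn → Nn → A)
    (θ : G → Nn → A) (g : G)
    (hθ : ∀ n n', S g (f (conj g⁻¹ n) (conj g⁻¹ n')) * (f n n')⁻¹ =
      S (ι n) (θ g n') * (θ g (n * n'))⁻¹ * θ g n) (x y : A × Nn) :
    twistedConj S conj θ g (extMul (S.comp ι) f x y) =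
      extMul (S.comp ι) f (twistedConj S conj θ g x) (twistedConj S conj θ g y) := by
  obtain ⟨a, n⟩ := x
  obtain ⟨a', n'⟩ := y
  have hmul := conj_mul_of_injective hι hconj g n n'
  have hcoboundary := hθ (conj g n) (conj g n')
  rw [conj_inv_conj_of_injective hι hconj, conj_inv_conj_of_injective hι hconj, ← hmul,
    mul_inv_eq_iff_eq_mul] at hcoboundary
  refine Prod.ext ?_ hmul
  simp only [twistedConj, extMul, MonoidHom.comp_apply, map_mul, hcoboundary,
    ← S.mulAut_apply_comm_of_conj (hconj g n) a']
  simp only [mul_comm, mul_left_comm, mul_inv_cancel_left]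

theorem twistedConj_one (S : G →* MulAut A) {ι : Nn →* G} (hι : Function.Injective ι)
    {conj : G → Nn → Nn} (hconj : ∀ g m, ι (conj g m) = g * ι m * g⁻¹) (θ : G → Nn → A)
    (g : G) (hθ1 : θ g 1 = 1) (a : A) :
    twistedConj S conj θ g (a, 1) = (S g a, 1) := by
  simp [twistedConj, conj_one_of_injective hι hconj, hθ1]

end TwistedConj

theorem stmt_3_general {A Nn G : Type*} [CommGroup A] [Group Nn] [Group G]
    (S : G →* MulAut A) (ι : Nn →* G) (hι : Function.Injective ι)
    (conj : G → Nn → Nn) (hconj : ∀ g m, ι (conj g m) = g * ι m * g⁻¹)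
    (f : Nn → Nn → A)
    (θ : G → Nn → A) (hθ1 : ∀ g, θ g 1 = 1)
    (hθ : ∀ g n n', S g (f (conj g⁻¹ n) (conj g⁻¹ n')) * (f n n')⁻¹ =
      S (ι n) (θ g n') * (θ g (n * n'))⁻¹ * θ g n) :
    ∀ g : G,
      let Ψ : A × Nn → A × Nn := fun z => (S g z.1 * θ g (conj g z.2), conj g z.2)
      let Φg : A × Nn → A × Nn :=
        fun z => (S g⁻¹ z.1 * (S g⁻¹ (θ g (conj g (conj g⁻¹ z.2))))⁻¹, conj g⁻¹ z.2)
      (∀ x y, Ψ (extMul (S.comp ι) f x y) = extMul (S.comp ι) f (Ψ x) (Ψ y)) ∧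
      Function.LeftInverse Φg Ψ ∧ Function.RightInverse Φg Ψ ∧
      (∀ a : A, ∃ b : A, Ψ (a, (1 : Nn)) = (b, 1)) := by
  intro g Ψ Φg
  refine ⟨twistedConj_extMul S hι hconj f θ g (hθ g), ?_, ?_,
    fun a => ⟨S g a, twistedConj_one S hι hconj θ g (hθ1 g) a⟩⟩
  · rintro ⟨a, n⟩
    simp only [Ψ, Φg, conj_inv_conj_of_injective hι hconj, map_mul, map_inv,
      MulAut.inv_apply_self, mul_inv_cancel_right]
  · rintro ⟨a, n⟩
    simp only [Ψ, Φg, conj_conj_inv_of_injective hι hconj, map_mul, map_inv,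
      MulAut.apply_inv_self, inv_mul_cancel_right]

/-- given `θ` with `d_N(θ(g)) = g.f − f`, each map
`ψ̂_θ(g) : (a,n) ↦ (S(g)(a) · θ(g)(gng⁻¹), gng⁻¹)` is an automorphism of `N̂ = A ×_f N`
preserving `A`, with inverse `(a,n) ↦ (S(g⁻¹)(a) · ((g⁻¹.θ(g))(g⁻¹ng))⁻¹, g⁻¹ng)`. -/
theorem stmt_3 {A Nn G : Type*} [CommGroup A] [Group Nn] [Group G]
    (S : G →* MulAut A) (ι : Nn →* G) (hι : Function.Injective ι)
    (conj : G → Nn → Nn) (hconj : ∀ g m, ι (conj g m) = g * ι m * g⁻¹)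
    (f : Nn → Nn → A)
    (hnorm : ∀ n, f 1 n = 1 ∧ f n 1 = 1)
    (hcoc : ∀ n n' n'', S (ι n) (f n' n'') * f n (n' * n'') = f (n * n') n'' * f n n')
    (θ : G → Nn → A) (hθ1 : ∀ g, θ g 1 = 1)
    (hθ : ∀ g n n', S g (f (conj g⁻¹ n) (conj g⁻¹ n')) * (f n n')⁻¹ =
      S (ι n) (θ g n') * (θ g (n * n'))⁻¹ * θ g n) :
    ∀ g : G,
      let Ψ : A × Nn → A × Nn := fun z => (S g z.1 * θ g (conj g z.2), conj g z.2)
      let Φg : A × Nn → A × Nn :=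
        fun z => (S g⁻¹ z.1 * (S g⁻¹ (θ g (conj g (conj g⁻¹ z.2))))⁻¹, conj g⁻¹ z.2)
      (∀ x y, Ψ (extMul (S.comp ι) f x y) = extMul (S.comp ι) f (Ψ x) (Ψ y)) ∧
      Function.LeftInverse Φg Ψ ∧ Function.RightInverse Φg Ψ ∧
      (∀ a : A, ∃ b : A, Ψ (a, (1 : Nn)) = (b, 1)) :=
  stmt_3_general S ι hι conj hconj f θ hθ1 hθ
end

section
/- Let G be a group, N ⊴ G normal, (A,S) a G-module, f ∈ Z^2(N,A) and \hat{N} = A ×_f N. The conjugation homomorphism ψ : G → Aut(A) × Aut(N), g ↦ (S(g), c_g|_N) lifts to a group homomorphism \hat{ψ} : G → Aut(\hat{N}, A) with Φ ∘ \hat{ψ} = ψ if and only if there exists θ : G → C^1(N,A) with d_N(θ(g)) = g.f − f for all g ∈ G and the class [d_{S_ψ}θ] ∈ H^2(G, Z^1(N,A)) vanishes. -/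
theorem Function.bijective_of_map_mul {G X : Type*} [Group G] {Ψ : G → X → X}
    (hone : ∀ x, Ψ 1 x = x) (hmul : ∀ g g' x, Ψ (g * g') x = Ψ g (Ψ g' x)) (g : G) :
    Function.Bijective (Ψ g) :=
  letI : MulAction G X := { smul := Ψ, one_smul := hone, mul_smul := hmul }
  MulAction.bijective g

namespace NormalExtension

variable {A Nn G : Type*} [CommGroup A] [Group G]

/-- `d_{S_ψ} θ`, written multiplicatively. -/
def gCoboundary (S : G →* MulAut A) (conj : G → Nn → Nn) (θ : G → Nn → A) (g g' : G) (n : Nn) :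
    A :=
  S g (θ g' (conj g⁻¹ n)) * (θ (g * g') n)⁻¹ * θ g n

theorem gCoboundary_div (S : G →* MulAut A) (conj : G → Nn → Nn) (θ θ' : G → Nn → A)
    (g g' : G) (n : Nn) :
    gCoboundary S conj (θ / θ') g g' n =
      gCoboundary S conj θ g g' n / gCoboundary S conj θ' g g' n := by
  simp only [gCoboundary, Pi.div_apply, div_eq_mul_inv, map_mul, map_inv, mul_inv, inv_inv]
  grind

variable [Group Nn]

/-- `d_N c`, written multiplicatively. -/
def nCoboundary (S : G →* MulAut A) (ι : Nn →* G) (c : Nn → A) (n n' : Nn) : A :=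
  S (ι n) (c n') * (c (n * n'))⁻¹ * c n

theorem nCoboundary_div (S : G →* MulAut A) (ι : Nn →* G) (c c' : Nn → A) (n n' : Nn) :
    nCoboundary S ι (c / c') n n' = nCoboundary S ι c n n' / nCoboundary S ι c' n n' := by
  simp only [nCoboundary, Pi.div_apply, div_eq_mul_inv, map_mul, map_inv, mul_inv, inv_inv]
  grind

theorem nCoboundary_eq_one_iff (S : G →* MulAut A) (ι : Nn →* G) (c : Nn → A) (n n' : Nn) :
    nCoboundary S ι c n n' = 1 ↔ c (n * n') = c n * S (ι n) (c n') := by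
  rw [nCoboundary, mul_right_comm, mul_inv_eq_one, eq_comm, mul_comm]

theorem map_one_of_nCoboundary_eq_one (S : G →* MulAut A) (ι : Nn →* G) {c : Nn → A}
    (hc : nCoboundary S ι c 1 1 = 1) : c 1 = 1 := by
  simpa [nCoboundary] using hc

theorem exists_gCoboundary_eq_one_iff (S : G →* MulAut A) (ι : Nn →* G) (conj : G → Nn → Nn)
    (F : G → Nn → Nn → A) :
    (∃ θ : G → Nn → A, (∀ g, θ g 1 = 1) ∧ (∀ g n n', F g n n' = nCoboundary S ι (θ g) n n') ∧
        ∀ g g' n, gCoboundary S conj θ g g' n = 1) ↔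
      ∃ θ : G → Nn → A, (∀ g, θ g 1 = 1) ∧ (∀ g n n', F g n n' = nCoboundary S ι (θ g) n n') ∧
        ∃ η : G → Nn → A, (∀ g n n', η g (n * n') = η g n * S (ι n) (η g n')) ∧
          ∀ g g' n, gCoboundary S conj θ g g' n = gCoboundary S conj η g g' n := by
  constructor
  · rintro ⟨θ, hθ1, hF, hθ⟩
    exact ⟨θ, hθ1, hF, 1, by simp, fun g g' n => (hθ g g' n).trans (by simp [gCoboundary])⟩
  · rintro ⟨θ, hθ1, hF, η, hη, hθη⟩
    have hηN g n n' : nCoboundary S ι (η g) n n' = 1 := (nCoboundary_eq_one_iff ..).2 (hη g n n')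
    refine ⟨θ / η, fun g => ?_, fun g n n' => ?_, fun g g' n => ?_⟩
    · simp [hθ1, map_one_of_nCoboundary_eq_one S ι (hηN g 1 1)]
    · rw [Pi.div_apply, nCoboundary_div, hηN, div_one, hF]
    · rw [gCoboundary_div, hθη, div_self']

section Conj

variable {ι : Nn →* G} {conj : G → Nn → Nn}

theorem conj_mul (hι : Function.Injective ι) (hconj : ∀ g m, ι (conj g m) = g * ι m * g⁻¹)
    (g : G) (m m' : Nn) : conj g (m * m') = conj g m * conj g m' :=
  hι <| by simp only [hconj, map_mul]; group

theorem conj_one (hι : Function.Injective ι) (hconj : ∀ g m, ι (conj g m) = g * ι m * g⁻¹)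
    (g : G) : conj g 1 = 1 :=
  hι <| by simp [hconj]

theorem conj_conj (hι : Function.Injective ι) (hconj : ∀ g m, ι (conj g m) = g * ι m * g⁻¹)
    (g g' : G) (m : Nn) : conj g (conj g' m) = conj (g * g') m :=
  hι <| by simp only [hconj]; group

theorem one_conj (hι : Function.Injective ι) (hconj : ∀ g m, ι (conj g m) = g * ι m * g⁻¹)
    (m : Nn) : conj 1 m = m :=
  hι <| by simp [hconj]

theorem conj_conj_inv (hι : Function.Injective ι) (hconj : ∀ g m, ι (conj g m) = g * ι m * g⁻¹)
    (g : G) (m : Nn) : conj g (conj g⁻¹ m) = m := by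
  rw [conj_conj hι hconj, mul_inv_cancel, one_conj hι hconj]

theorem conj_inv_conj (hι : Function.Injective ι) (hconj : ∀ g m, ι (conj g m) = g * ι m * g⁻¹)
    (g : G) (m : Nn) : conj g⁻¹ (conj g m) = m := by
  rw [conj_conj hι hconj, inv_mul_cancel, one_conj hι hconj]

theorem apply_conj_apply (S : G →* MulAut A) (hconj : ∀ g m, ι (conj g m) = g * ι m * g⁻¹)
    (g : G) (m : Nn) (a : A) : S (ι (conj g m)) (S g a) = S g (S (ι m) a) := by
  simp [hconj]

theorem gCoboundary_one_one (S : G →* MulAut A) (hι : Function.Injective ι)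
    (hconj : ∀ g m, ι (conj g m) = g * ι m * g⁻¹) (θ : G → Nn → A) (n : Nn) :
    gCoboundary S conj θ 1 1 n = θ 1 n := by
  simp [gCoboundary, one_conj hι hconj]

end Conj

def twistedLift (S : G →* MulAut A) (conj : G → Nn → Nn) (c : Nn → A) (g : G) (x : A × Nn) :
    A × Nn :=
  (S g x.1 * c (conj g x.2), conj g x.2)

variable (S : G →* MulAut A) {ι : Nn →* G} {conj : G → Nn → Nn} {f : Nn → Nn → A}

theorem eq_twistedLift (hι : Function.Injective ι) (hconj : ∀ g m, ι (conj g m) = g * ι m * g⁻¹)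
    (hf : ∀ n, f 1 n = 1) {g : G} {Φ : A × Nn → A × Nn}
    (hmul : ∀ x y, Φ (extMul (S.comp ι) f x y) = extMul (S.comp ι) f (Φ x) (Φ y))
    (hA : ∀ a, Φ (a, 1) = (S g a, 1)) (hproj : ∀ x, (Φ x).2 = conj g x.2) :
    Φ = twistedLift S conj (fun n => (Φ (1, conj g⁻¹ n)).1) g := by
  funext ⟨a, n⟩
  have hsplit : (a, n) = extMul (S.comp ι) f (a, 1) (1, n) := by simp [extMul, hf]
  rw [hsplit, hmul, hA, ← Prod.mk.eta (p := Φ (1, n)), hproj]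
  simp [extMul, twistedLift, hf, conj_inv_conj hι hconj]

theorem twistedLift_one_apply (hι : Function.Injective ι)
    (hconj : ∀ g m, ι (conj g m) = g * ι m * g⁻¹) {c : Nn → A} (hc : ∀ n, c n = 1)
    (x : A × Nn) : twistedLift S conj c 1 x = x := by
  simp [twistedLift, hc, one_conj hι hconj]

theorem twistedLift_one_iff (hι : Function.Injective ι)
    (hconj : ∀ g m, ι (conj g m) = g * ι m * g⁻¹) (c : Nn → A) (g : G) :
    (∀ a, twistedLift S conj c g (a, 1) = (S g a, 1)) ↔ c 1 = 1 := by
  simp [twistedLift, conj_one hι hconj]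

theorem twistedLift_extMul_apply_iff (hι : Function.Injective ι)
    (hconj : ∀ g m, ι (conj g m) = g * ι m * g⁻¹) (c : Nn → A) (g : G) (a b : A) (n m : Nn) :
    twistedLift S conj c g (extMul (S.comp ι) f (a, n) (b, m)) =
        extMul (S.comp ι) f (twistedLift S conj c g (a, n)) (twistedLift S conj c g (b, m)) ↔
      S g (f n m) * (f (conj g n) (conj g m))⁻¹ = nCoboundary S ι c (conj g n) (conj g m) := by
  simp only [twistedLift, extMul, nCoboundary, Prod.mk.injEq, conj_mul hι hconj, and_true,
    MonoidHom.comp_apply, map_mul, apply_conj_apply S hconj]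
  refine eq_iff_eq_of_div_eq_div (Additive.ofMul.injective ?_)
  simp only [ofMul_div, ofMul_mul, ofMul_inv]
  abel

theorem twistedLift_extMul_iff (hι : Function.Injective ι)
    (hconj : ∀ g m, ι (conj g m) = g * ι m * g⁻¹) (c : Nn → A) (g : G) :
    (∀ x y, twistedLift S conj c g (extMul (S.comp ι) f x y) =
        extMul (S.comp ι) f (twistedLift S conj c g x) (twistedLift S conj c g y)) ↔
      ∀ n n', S g (f (conj g⁻¹ n) (conj g⁻¹ n')) * (f n n')⁻¹ = nCoboundary S ι c n n' := by
  simp only [Prod.forall, twistedLift_extMul_apply_iff S hι hconj]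
  refine ⟨fun h n n' => ?_, fun h _ n _ n' => ?_⟩
  · simpa only [conj_conj_inv hι hconj] using h 1 (conj g⁻¹ n) 1 (conj g⁻¹ n')
  · simpa only [conj_inv_conj hι hconj] using h (conj g n) (conj g n')

theorem twistedLift_mul_apply_iff (hι : Function.Injective ι)
    (hconj : ∀ g m, ι (conj g m) = g * ι m * g⁻¹) (θ : G → Nn → A) (g g' : G) (a : A) (n : Nn) :
    twistedLift S conj (θ (g * g')) (g * g') (a, n) =
        twistedLift S conj (θ g) g (twistedLift S conj (θ g') g' (a, n)) ↔
      gCoboundary S conj θ g g' (conj (g * g') n) = 1 := by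
  rw [eq_comm (b := (1 : A))]
  simp only [twistedLift, gCoboundary, Prod.mk.injEq, conj_conj hι hconj, and_true, map_mul,
    MulAut.mul_apply, inv_mul_cancel_left]
  refine eq_iff_eq_of_div_eq_div (Additive.ofMul.injective ?_)
  simp only [ofMul_div, ofMul_mul, ofMul_inv, ofMul_one]
  abel

theorem twistedLift_mul_iff (hι : Function.Injective ι)
    (hconj : ∀ g m, ι (conj g m) = g * ι m * g⁻¹) (θ : G → Nn → A) (g g' : G) :
    (∀ x, twistedLift S conj (θ (g * g')) (g * g') x =
        twistedLift S conj (θ g) g (twistedLift S conj (θ g') g' x)) ↔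
      ∀ n, gCoboundary S conj θ g g' n = 1 := by
  simp only [Prod.forall, twistedLift_mul_apply_iff S hι hconj]
  refine ⟨fun h n => ?_, fun h _ n => h _⟩
  simpa only [conj_conj_inv hι hconj] using h 1 (conj (g * g')⁻¹ n)

theorem exists_lift_iff (hι : Function.Injective ι) (hconj : ∀ g m, ι (conj g m) = g * ι m * g⁻¹)
    (hf : ∀ n, f 1 n = 1) :
    (∃ Ψ : G → A × Nn → A × Nn,
      (∀ g, Function.Bijective (Ψ g)) ∧
      (∀ g x y, Ψ g (extMul (S.comp ι) f x y) = extMul (S.comp ι) f (Ψ g x) (Ψ g y)) ∧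
      (∀ g (a : A), Ψ g (a, (1 : Nn)) = (S g a, 1)) ∧
      (∀ g (x : A × Nn), (Ψ g x).2 = conj g x.2) ∧
      (∀ g g' x, Ψ (g * g') x = Ψ g (Ψ g' x))) ↔
    ∃ θ : G → Nn → A, (∀ g, θ g 1 = 1) ∧
      (∀ g n n', S g (f (conj g⁻¹ n) (conj g⁻¹ n')) * (f n n')⁻¹ = nCoboundary S ι (θ g) n n') ∧
      ∀ g g' n, gCoboundary S conj θ g g' n = 1 := by
  constructor
  · rintro ⟨Ψ, -, hmul, hA, hproj, hcomp⟩
    obtain ⟨θ, rfl⟩ : ∃ θ : G → Nn → A, Ψ = fun g => twistedLift S conj (θ g) g :=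
      ⟨_, funext fun g => eq_twistedLift S hι hconj hf (hmul g) (hA g) (hproj g)⟩
    exact ⟨θ, fun g => (twistedLift_one_iff S hι hconj _ g).1 (hA g),
      fun g => (twistedLift_extMul_iff S hι hconj _ g).1 (hmul g),
      fun g g' => (twistedLift_mul_iff S hι hconj θ g g').1 (hcomp g g')⟩
  · rintro ⟨θ, hθ1, hN, hG⟩
    have hcomp g g' := (twistedLift_mul_iff S hι hconj θ g g').2 (hG g g')
    have hone : ∀ x, twistedLift S conj (θ 1) 1 x = x := twistedLift_one_apply S hι hconj
      fun n => (gCoboundary_one_one S hι hconj θ n).symm.trans (hG 1 1 n)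
    exact ⟨fun g => twistedLift S conj (θ g) g, Function.bijective_of_map_mul hone hcomp,
      fun g => (twistedLift_extMul_iff S hι hconj _ g).2 (hN g),
      fun g => (twistedLift_one_iff S hι hconj _ g).2 (hθ1 g), fun _ _ => rfl, hcomp⟩

end NormalExtension

theorem stmt_5_general {A Nn G : Type*} [CommGroup A] [Group Nn] [Group G]
    (S : G →* MulAut A) (ι : Nn →* G) (hι : Function.Injective ι)
    (conj : G → Nn → Nn) (hconj : ∀ g m, ι (conj g m) = g * ι m * g⁻¹)
    (f : Nn → Nn → A)
    (hnorm : ∀ n, f 1 n = 1 ∧ f n 1 = 1) :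
    -- a lift ψ̂ of ψ to a homomorphism G → Aut(N̂, A) exists ...
    (∃ Ψ : G → A × Nn → A × Nn,
      (∀ g, Function.Bijective (Ψ g)) ∧
      (∀ g x y, Ψ g (extMul (S.comp ι) f x y) = extMul (S.comp ι) f (Ψ g x) (Ψ g y)) ∧
      (∀ g (a : A), Ψ g (a, (1 : Nn)) = (S g a, 1)) ∧
      (∀ g (x : A × Nn), (Ψ g x).2 = conj g x.2) ∧
      (∀ g g' x, Ψ (g * g') x = Ψ g (Ψ g' x))) ↔
    -- ... iff f is smoothly cohomologically invariant and [d_{S_ψ}θ] vanishes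
    (∃ θ : G → Nn → A, (∀ g, θ g 1 = 1) ∧
      (∀ g n n', S g (f (conj g⁻¹ n) (conj g⁻¹ n')) * (f n n')⁻¹ =
        S (ι n) (θ g n') * (θ g (n * n'))⁻¹ * θ g n) ∧
      ∃ η : G → Nn → A,
        (∀ g n n', η g (n * n') = η g n * S (ι n) (η g n')) ∧
        (∀ g g' n, S g (θ g' (conj g⁻¹ n)) * (θ (g * g') n)⁻¹ * θ g n =
          S g (η g' (conj g⁻¹ n)) * (η (g * g') n)⁻¹ * η g n)) :=
  (NormalExtension.exists_lift_iff S hι hconj fun n => (hnorm n).1).trans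
    (NormalExtension.exists_gCoboundary_eq_one_iff S ι conj _)

/-- the conjugation homomorphism `ψ : G → Aut(A) × Aut(N)` lifts to a
homomorphism `ψ̂ : G → Aut(N̂,A)` with `Φ ∘ ψ̂ = ψ` iff there is `θ : G → C¹(N,A)` with
`d_N(θ(g)) = g.f − f` for all `g` and the class `[d_{S_ψ}θ] ∈ H²(G, Z¹(N,A))` vanishes. -/
theorem stmt_5 {A Nn G : Type*} [CommGroup A] [Group Nn] [Group G]
    (S : G →* MulAut A) (ι : Nn →* G) (hι : Function.Injective ι)
    (conj : G → Nn → Nn) (hconj : ∀ g m, ι (conj g m) = g * ι m * g⁻¹)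
    (f : Nn → Nn → A)
    (hnorm : ∀ n, f 1 n = 1 ∧ f n 1 = 1)
    (hcoc : ∀ n n' n'', S (ι n) (f n' n'') * f n (n' * n'') = f (n * n') n'' * f n n') :
    -- a lift ψ̂ of ψ to a homomorphism G → Aut(N̂, A) exists ...
    (∃ Ψ : G → A × Nn → A × Nn,
      (∀ g, Function.Bijective (Ψ g)) ∧
      (∀ g x y, Ψ g (extMul (S.comp ι) f x y) = extMul (S.comp ι) f (Ψ g x) (Ψ g y)) ∧
      (∀ g (a : A), Ψ g (a, (1 : Nn)) = (S g a, 1)) ∧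
      (∀ g (x : A × Nn), (Ψ g x).2 = conj g x.2) ∧
      (∀ g g' x, Ψ (g * g') x = Ψ g (Ψ g' x))) ↔
    -- ... iff f is smoothly cohomologically invariant and [d_{S_ψ}θ] vanishes
    (∃ θ : G → Nn → A, (∀ g, θ g 1 = 1) ∧
      (∀ g n n', S g (f (conj g⁻¹ n) (conj g⁻¹ n')) * (f n n')⁻¹ =
        S (ι n) (θ g n') * (θ g (n * n'))⁻¹ * θ g n) ∧
      ∃ η : G → Nn → A,
        (∀ g n n', η g (n * n') = η g n * S (ι n) (η g n')) ∧
        (∀ g g' n, S g (θ g' (conj g⁻¹ n)) * (θ (g * g') n)⁻¹ * θ g n =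
          S g (η g' (conj g⁻¹ n)) * (η (g * g') n)⁻¹ * η g n)) :=
  stmt_5_general S ι hι conj hconj f hnorm
end

section
/- Let G be a group, N ⊴ G, (A,S) a G-module, f ∈ Z^2(N,A), \hat{N} = A ×_f N, and let Γ ⊆ Aut(\hat{N},A) × G be the pullback {(φ,g) : Φ(φ) = ψ(g)} of the extension Aut(\hat{N},A) → Aut(A)×Aut(N) along the conjugation homomorphism ψ(g) = (S(g), c_g|_N). Define α : \hat{N} → Γ by α(a,n) := (c_{(a,n)}, n) (conjugation by (a,n) in \hat{N}, paired with n ∈ N ⊆ G). Then ker(α) = A^N, the subgroup of N-invariants of A ⊆ \hat{N}. -/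
section NormalizedCocycle

variable {A N : Type*} [CommGroup A] [Group N] (S : N →* MulAut A) (f : N → N → A)

theorem extMul_inl_left (hf : ∀ n, f 1 n = 1) (a : A) (y : A × N) :
    extMul S f (a, 1) y = (a * y.1, y.2) := by
  simp [extMul, hf]

theorem extMul_inl_right (hf : ∀ n, f n 1 = 1) (y : A × N) (a : A) :
    extMul S f y (a, 1) = (y.1 * S y.2 a, y.2) := by
  simp [extMul, hf]

theorem extMul_inl_central_iff (hnorm : ∀ n, f 1 n = 1 ∧ f n 1 = 1) (a : A) :
    (∀ y : A × N, extMul S f (a, 1) y = extMul S f y (a, 1)) ↔ ∀ m : N, S m a = a := by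
  simp only [extMul_inl_left S f (fun n => (hnorm n).1),
    extMul_inl_right S f (fun n => (hnorm n).2), Prod.ext_iff, and_true, Prod.forall]
  refine ⟨fun h m => ?_, fun h b m => by rw [h m, mul_comm]⟩
  -- commuting with `(1, m)` already forces `S m a = a`
  simpa using (h 1 m).symm

end NormalizedCocycle

theorem stmt_8_general {A Nn G : Type*} [CommGroup A] [Group Nn] [Group G]
    (S : G →* MulAut A) (ι : Nn →* G) (hι : Function.Injective ι)
    (f : Nn → Nn → A)
    (hnorm : ∀ n, f 1 n = 1 ∧ f n 1 = 1) :
    ∀ (a : A) (n : Nn),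
      ((∀ y : A × Nn, extMul (S.comp ι) f (a, n) y = extMul (S.comp ι) f y (a, n)) ∧
          ι n = 1) ↔
        (n = 1 ∧ ∀ m : Nn, S (ι m) a = a) := by
  intro a n
  rw [(injective_iff_map_eq_one' ι).1 hι n, and_comm]
  refine and_congr_right fun hn => ?_
  subst hn
  exact extMul_inl_central_iff (S.comp ι) f hnorm a

/-- for `α : N̂ → Γ`, `α(a,n) = (c_{(a,n)}, n)`, the kernel of `α` is `A^N`,
the subgroup of `N`-invariants of `A ⊆ N̂`.  Membership of `(a,n)` in the kernel means that
conjugation by `(a,n)` in `N̂ = A ×_f N` is trivial (equivalently `(a,n)` is central) and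
that `n = 1` in `N ⊆ G`. -/
theorem stmt_8 {A Nn G : Type*} [CommGroup A] [Group Nn] [Group G]
    (S : G →* MulAut A) (ι : Nn →* G) (hι : Function.Injective ι)
    (f : Nn → Nn → A)
    (hnorm : ∀ n, f 1 n = 1 ∧ f n 1 = 1)
    (hcoc : ∀ n n' n'', S (ι n) (f n' n'') * f n (n' * n'') = f (n * n') n'' * f n n') :
    ∀ (a : A) (n : Nn),
      ((∀ y : A × Nn, extMul (S.comp ι) f (a, n) y = extMul (S.comp ι) f y (a, n)) ∧
          ι n = 1) ↔
        (n = 1 ∧ ∀ m : Nn, S (ι m) a = a) :=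
  stmt_8_general S ι hι f hnorm
end

section
/- Let G be a group, N ⊴ G, (A,S) a G-module, f ∈ Z^2(N,A), \hat{N} = A ×_f N, and Γ the pullback of Aut(\hat{N},A) along ψ : G → Aut(A)×Aut(N). The pair consisting of α : \hat{N} → Γ, α(x) = (c_x, q(x)) and the action \hat{S} : Γ → Aut(\hat{N}), \hat{S}(φ,g) := φ, satisfies the crossed-module axioms: α(\hat{S}(γ)(x)) = γ α(x) γ^{-1} for all γ ∈ Γ, x ∈ \hat{N}, and \hat{S}(α(x)) is conjugation by x. -/
/-! A multiplicative bijection `φ` of `N̂` fixing `(1, 1)` maps inverses to inverses, because in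
the monoid `N̂` (associative and unital by the cocycle and normalization conditions) left and
right inverses coincide. Hence `φ (x y x⁻¹) = φ x · φ y · (φ x)⁻¹`, which, after substituting
`y ↦ φ⁻¹ y`, is the first half of CM1; the second half is the pullback condition on `(φ, g)`,
and CM2 holds by definition. -/

namespace extMul

variable {A N : Type*} [CommGroup A] [Group N] {S : N →* MulAut A} {f : N → N → A}

theorem one_left (hf : ∀ n, f 1 n = 1) (x : A × N) : extMul S f (1, 1) x = x := by
  simp [extMul, hf]

theorem one_right (hf : ∀ n, f n 1 = 1) (x : A × N) : extMul S f x (1, 1) = x := by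
  simp [extMul, hf]

theorem assoc (hf : ∀ n n' n'', S n (f n' n'') * f n (n' * n'') = f (n * n') n'' * f n n')
    (x y z : A × N) : extMul S f (extMul S f x y) z = extMul S f x (extMul S f y z) := by
  refine Prod.ext ?_ (mul_assoc _ _ _)
  simp only [extMul, map_mul, MulAut.mul_apply, mul_assoc, hf]
  simp only [mul_comm, mul_left_comm, mul_assoc]

theorem left_inv_eq_right_inv (hf₁ : ∀ n, f 1 n = 1 ∧ f n 1 = 1)
    (hf₂ : ∀ n n' n'', S n (f n' n'') * f n (n' * n'') = f (n * n') n'' * f n n')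
    {x y z : A × N} (hy : extMul S f y x = (1, 1)) (hz : extMul S f x z = (1, 1)) : y = z :=
  calc y = extMul S f y (extMul S f x z) := by rw [hz, one_right fun n => (hf₁ n).2]
    _ = extMul S f (extMul S f y x) z := (assoc hf₂ y x z).symm
    _ = z := by rw [hy, one_left fun n => (hf₁ n).1]

theorem map_inv {φ : A × N → A × N}
    (hφ : ∀ x y, φ (extMul S f x y) = extMul S f (φ x) (φ y)) (hφ₁ : φ (1, 1) = (1, 1))
    (hf₁ : ∀ n, f 1 n = 1 ∧ f n 1 = 1)
    (hf₂ : ∀ n n' n'', S n (f n' n'') * f n (n' * n'') = f (n * n') n'' * f n n')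
    {inv : A × N → A × N}
    (hinv : ∀ x, extMul S f x (inv x) = (1, 1) ∧ extMul S f (inv x) x = (1, 1)) (x : A × N) :
    φ (inv x) = inv (φ x) :=
  left_inv_eq_right_inv hf₁ hf₂ (by rw [← hφ, (hinv x).2, hφ₁]) (hinv (φ x)).1

end extMul

theorem stmt_9_general {A Nn G : Type*} [CommGroup A] [Group Nn] [Group G]
    (S : G →* MulAut A) (ι : Nn →* G)
    (f : Nn → Nn → A)
    (hnorm : ∀ n, f 1 n = 1 ∧ f n 1 = 1)
    (hcoc : ∀ n n' n'', S (ι n) (f n' n'') * f n (n' * n'') = f (n * n') n'' * f n n')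
    -- inversion in the extension N̂ = A ×_f N
    (inv : A × Nn → A × Nn)
    (hinv : ∀ x, extMul (S.comp ι) f x (inv x) = (1, 1) ∧
      extMul (S.comp ι) f (inv x) x = (1, 1))
    -- (φ, g) is an element of the pullback Γ ⊆ Aut(N̂,A) × G, i.e. Φ(φ) = ψ(g)
    (φ : A × Nn → A × Nn) (g : G)
    (hφbij : Function.Bijective φ)
    (hφmul : ∀ x y, φ (extMul (S.comp ι) f x y) = extMul (S.comp ι) f (φ x) (φ y))
    (hφA : ∀ a : A, φ (a, (1 : Nn)) = (S g a, 1))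
    (hφproj : ∀ x : A × Nn, ι ((φ x).2) = g * ι x.2 * g⁻¹) :
    let m := extMul (S.comp ι) f
    let cconj : A × Nn → A × Nn → A × Nn := fun x y => m (m x y) (inv x)
    let alpha : A × Nn → ((A × Nn → A × Nn) × G) := fun x => (cconj x, ι x.2)
    let Shat : ((A × Nn → A × Nn) × G) → (A × Nn → A × Nn) := Prod.fst
    -- CM1, first component: c_{φ(x)} = φ ∘ c_x ∘ φ⁻¹
    (∀ x y : A × Nn,
      (alpha (Shat (φ, g) x)).1 y = φ ((alpha x).1 (Function.invFun φ y))) ∧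
    -- CM1, second component: q(φ(x)) = g q(x) g⁻¹ in G
    (∀ x : A × Nn, (alpha (Shat (φ, g) x)).2 = g * (alpha x).2 * g⁻¹) ∧
    -- CM2: Ŝ(α(x)) is conjugation by x
    (∀ x y : A × Nn, Shat (alpha x) y = m (m x y) (inv x)) := by
  intro m cconj alpha Shat
  have hφ₁ : φ (1, 1) = (1, 1) := by simpa using hφA 1
  refine ⟨fun x y => ?_, hφproj, fun _ _ => rfl⟩
  change m (m (φ x) y) (inv (φ x)) = φ (m (m x (Function.invFun φ y)) (inv x))
  rw [hφmul, hφmul, extMul.map_inv hφmul hφ₁ hnorm hcoc hinv,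
    Function.rightInverse_invFun hφbij.2 y]

/-- the pair `α : N̂ → Γ`, `α(x) = (c_x, q(x))`, together with the action
`Ŝ(φ,g) := φ` of `Γ` on `N̂`, satisfies the crossed-module axioms:
`α(Ŝ(γ)(x)) = γ α(x) γ⁻¹` for `γ = (φ,g) ∈ Γ`, and `Ŝ(α(x))` is conjugation by `x`. -/
theorem stmt_9 {A Nn G : Type*} [CommGroup A] [Group Nn] [Group G]
    (S : G →* MulAut A) (ι : Nn →* G) (hι : Function.Injective ι)
    (f : Nn → Nn → A)
    (hnorm : ∀ n, f 1 n = 1 ∧ f n 1 = 1)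
    (hcoc : ∀ n n' n'', S (ι n) (f n' n'') * f n (n' * n'') = f (n * n') n'' * f n n')
    -- inversion in the extension N̂ = A ×_f N
    (inv : A × Nn → A × Nn)
    (hinv : ∀ x, extMul (S.comp ι) f x (inv x) = (1, 1) ∧
      extMul (S.comp ι) f (inv x) x = (1, 1))
    -- (φ, g) is an element of the pullback Γ ⊆ Aut(N̂,A) × G, i.e. Φ(φ) = ψ(g)
    (φ : A × Nn → A × Nn) (g : G)
    (hφbij : Function.Bijective φ)
    (hφmul : ∀ x y, φ (extMul (S.comp ι) f x y) = extMul (S.comp ι) f (φ x) (φ y))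
    (hφA : ∀ a : A, φ (a, (1 : Nn)) = (S g a, 1))
    (hφproj : ∀ x : A × Nn, ι ((φ x).2) = g * ι x.2 * g⁻¹) :
    let m := extMul (S.comp ι) f
    let cconj : A × Nn → A × Nn → A × Nn := fun x y => m (m x y) (inv x)
    let alpha : A × Nn → ((A × Nn → A × Nn) × G) := fun x => (cconj x, ι x.2)
    let Shat : ((A × Nn → A × Nn) × G) → (A × Nn → A × Nn) := Prod.fst
    -- CM1, first component: c_{φ(x)} = φ ∘ c_x ∘ φ⁻¹
    (∀ x y : A × Nn,
      (alpha (Shat (φ, g) x)).1 y = φ ((alpha x).1 (Function.invFun φ y))) ∧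
    -- CM1, second component: q(φ(x)) = g q(x) g⁻¹ in G
    (∀ x : A × Nn, (alpha (Shat (φ, g) x)).2 = g * (alpha x).2 * g⁻¹) ∧
    -- CM2: Ŝ(α(x)) is conjugation by x
    (∀ x y : A × Nn, Shat (alpha x) y = m (m x y) (inv x)) :=
  stmt_9_general S ι f hnorm hcoc inv hinv φ g hφbij hφmul hφA hφproj
end

section
/- For any totally antisymmetric collection of integers S_{pqr}, 1 ≤ p,q,r ≤ n, the map c_S : ℝ^n × ℤ^n × ℤ^n → ℝ/ℤ defined by c_S(x; u, v) := Σ_{p,q,r} S_{pqr} x_p u_q v_r (mod ℤ) is a 2-cocycle on the group ℤ^n with values in the ℤ^n-module A = Map(ℝ^n, ℝ/ℤ), where ℤ^n acts on A by translation: (z.F)(x) = F(x + z). Explicitly: c_S(x; u, v) + c_S(x; u+v, w) = c_S(x+u; v, w) + c_S(x; u, v+w) for all x ∈ ℝ^n and u, v, w ∈ ℤ^n. -/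
/-- `c_S(x; u, v) := Σ_{p,q,r} S_{pqr} x_p u_q v_r (mod ℤ)`, a 2-cochain on `ℤⁿ` with values
in `A = Map(ℝⁿ, ℝ/ℤ)` (written as a function of the base point `x ∈ ℝⁿ`). -/
noncomputable def cS (n : ℕ) (S : Fin n → Fin n → Fin n → ℤ)
    (x : Fin n → ℝ) (u v : Fin n → ℤ) : AddCircle (1 : ℝ) :=
  ((∑ p, ∑ q, ∑ r, (S p q r : ℝ) * x p * (u q : ℝ) * (v r : ℝ) : ℝ) : AddCircle (1 : ℝ))

/-!
`c_S` is the reduction mod `ℤ` of the real trilinear form `T(x, u, v) = Σ S_{pqr} x_p u_q v_r`.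
Expanding by additivity in each slot, the cocycle defect of a triadditive `T` is `T(u, v, w)`,
and for `u, v, w ∈ ℤⁿ` this is an integer, hence vanishes in `ℝ/ℤ`.
-/

open Finset

def trilinearForm {R : Type*} [CommRing R] {n : ℕ} (S : Fin n → Fin n → Fin n → ℤ)
    (x u v : Fin n → R) : R :=
  ∑ p, ∑ q, ∑ r, (S p q r : R) * x p * u q * v r

section trilinearForm

variable {R : Type*} [CommRing R] {n : ℕ} (S : Fin n → Fin n → Fin n → ℤ)

theorem trilinearForm_add_left (x x' u v : Fin n → R) :
    trilinearForm S (x + x') u v = trilinearForm S x u v + trilinearForm S x' u v := by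
  simp only [trilinearForm, Pi.add_apply, mul_add, add_mul, sum_add_distrib]

theorem trilinearForm_add_middle (x u u' v : Fin n → R) :
    trilinearForm S x (u + u') v = trilinearForm S x u v + trilinearForm S x u' v := by
  simp only [trilinearForm, Pi.add_apply, mul_add, add_mul, sum_add_distrib]

theorem trilinearForm_add_right (x u v v' : Fin n → R) :
    trilinearForm S x u (v + v') = trilinearForm S x u v + trilinearForm S x u v' := by
  simp only [trilinearForm, Pi.add_apply, mul_add, sum_add_distrib]

theorem trilinearForm_cocycle_defect (x u v w : Fin n → R) :
    trilinearForm S x u v + trilinearForm S x (u + v) w =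
      trilinearForm S (x + u) v w + trilinearForm S x u (v + w) - trilinearForm S u v w := by
  rw [trilinearForm_add_left, trilinearForm_add_middle, trilinearForm_add_right]
  ring

theorem intCast_trilinearForm (u v w : Fin n → ℤ) :
    ((trilinearForm S u v w : ℤ) : R) =
      trilinearForm S (fun p => (u p : R)) (fun p => (v p : R)) (fun p => (w p : R)) := by
  simp only [trilinearForm]
  push_cast
  rfl

end trilinearForm

theorem cS_eq_coe_trilinearForm (n : ℕ) (S : Fin n → Fin n → Fin n → ℤ) (x : Fin n → ℝ)
    (u v : Fin n → ℤ) :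
    cS n S x u v =
      ((trilinearForm S x (fun p => (u p : ℝ)) (fun p => (v p : ℝ)) : ℝ) : AddCircle (1 : ℝ)) :=
  rfl

theorem intCast_add_fun {n : ℕ} (u v : Fin n → ℤ) :
    (fun p => ((u + v) p : ℝ)) = (fun p => (u p : ℝ)) + fun p => (v p : ℝ) := by
  ext p
  simp

theorem stmt_11_general (n : ℕ) (S : Fin n → Fin n → Fin n → ℤ) :
    ∀ (x : Fin n → ℝ) (u v w : Fin n → ℤ),
      cS n S x u v + cS n S x (u + v) w =
        cS n S (x + fun p => (u p : ℝ)) v w + cS n S x u (v + w) := by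
  intro x u v w
  simp only [cS_eq_coe_trilinearForm, intCast_add_fun, ← AddCircle.coe_add,
    trilinearForm_cocycle_defect, ← intCast_trilinearForm, AddCircle.coe_sub]
  have hdefect : (((trilinearForm S u v w : ℤ) : ℝ) : AddCircle (1 : ℝ)) = 0 :=
    (AddCircle.coe_eq_zero_iff 1).2 ⟨_, zsmul_one _⟩
  rw [hdefect, sub_zero]

/-- for a totally antisymmetric integral collection `S_{pqr}`, `c_S` is a
2-cocycle on `ℤⁿ` with values in `Map(ℝⁿ, ℝ/ℤ)`, where `ℤⁿ` acts by translation: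
`c_S(x; u, v) + c_S(x; u+v, w) = c_S(x+u; v, w) + c_S(x; u, v+w)`. -/
theorem stmt_11 (n : ℕ) (S : Fin n → Fin n → Fin n → ℤ)
    (h1 : ∀ p q r, S p q r = -S q p r) (h2 : ∀ p q r, S p q r = -S p r q) :
    ∀ (x : Fin n → ℝ) (u v w : Fin n → ℤ),
      cS n S x u v + cS n S x (u + v) w =
        cS n S (x + fun p => (u p : ℝ)) v w + cS n S x u (v + w) :=
  stmt_11_general n S
end

section
/- Let 1 → N → \hat{G} →^q G → 1 be a group extension, H a group, and α : N → H a homomorphism such that α induces an isomorphism N/ker(α) ≅ im(α). Let μ : G → \hat{G} be a normalized set-theoretic section of q, and ν : G → H a normalized map. Then there exists a (unique) group homomorphism \hat{α} : \hat{G} → H with \hat{α}|_N = α and \hat{α} ∘ μ = ν if and only if: (i) im(α) is normal in the subgroup of H generated by im(α) and ν(G); (ii) α ∘ δ_μ = δ_ν, where δ_σ(g,g') := σ(g)σ(g')σ(gg')^{-1}; and (iii) for all g ∈ G and n ∈ N, α(μ(g) n μ(g)^{-1}) = ν(g) α(n) ν(g)^{-1}. -/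
/-!
Every element of the extension is uniquely `i n * μ g`, so a homomorphism extending `α` and `ν`
can only be `i n * μ g ↦ α n * ν g`. Conditions (ii) and (iii) are exactly what makes this map
multiplicative: multiplying `i a * μ g` by `i b * μ g'` moves `μ g` past `i b` (a conjugation)
and merges `μ g * μ g'` into `μ (g * g')` (a cocycle value). Conversely, a lift `F` maps
`i.range`, normal in the extension, onto `α.range`, so `F.range`, which contains `α.range` and
`ν(G)`, normalizes `α.range`.
-/

namespace GroupExtensionLift

variable {N E G H : Type*} [Group N] [Group E] [Group G] [Group H]
  {i : N →* E} {q : E →* G} (hker : ∀ x : E, q x = 1 ↔ x ∈ i.range)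
  {μ : G → E} (hμ : ∀ g, q (μ g) = g)

section Necessity

variable {α : N →* H} {ν : G → H} {F : E →* H}
  (hFi : ∀ n, F (i n) = α n) (hFμ : ∀ g, F (μ g) = ν g)
include hFi hFμ

theorem map_cocycle_eq {g g' : G} {m : N} (hm : i m = μ g * μ g' * (μ (g * g'))⁻¹) :
    α m = ν g * ν g' * (ν (g * g'))⁻¹ := by
  rw [← hFi, hm]
  simp only [map_mul, map_inv, hFμ]

omit [Group G] in
theorem map_conj_eq {g : G} {n m : N} (hm : i m = μ g * i n * (μ g)⁻¹) :
    α m = ν g * α n * (ν g)⁻¹ := by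
  rw [← hFi, hm]
  simp only [map_mul, map_inv, hFμ, hFi]

include hker in
theorem closure_le_normalizer_range :
    Subgroup.closure ((α.range : Set H) ∪ Set.range ν) ≤ Subgroup.normalizer α.range := by
  have hα : α.range = i.range.map F := by
    rw [MonoidHom.map_range]
    congr 1
    ext n
    exact (hFi n).symm
  have hnormal : i.range.Normal := by
    have : i.range = q.ker := by
      ext x
      exact (hker x).symm
    exact this ▸ q.normal_ker
  have hrange : F.range ≤ Subgroup.normalizer α.range := by
    calc F.range = (⊤ : Subgroup E).map F := F.range_eq_map
      _ = (Subgroup.normalizer i.range).map F := by rw [i.range.normalizer_eq_top]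
      _ ≤ _ := hα ▸ Subgroup.le_normalizer_map F
  refine (Subgroup.closure_le _).mpr (Set.union_subset ?_ ?_) |>.trans hrange
  · rintro _ ⟨n, rfl⟩
    exact ⟨i n, hFi n⟩
  · rintro _ ⟨g, rfl⟩
    exact ⟨μ g, hFμ g⟩

end Necessity

section Sufficiency

include hker

theorem map_inclusion_eq_one (n : N) : q (i n) = 1 :=
  (hker _).mpr ⟨n, rfl⟩

theorem conj_mem_range (x : E) (n : N) : x * i n * x⁻¹ ∈ i.range :=
  (hker _).mp (by simp [map_inclusion_eq_one hker])

include hμ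

theorem cocycle_mem_range (g g' : G) : μ g * μ g' * (μ (g * g'))⁻¹ ∈ i.range :=
  (hker _).mp (by simp [hμ])

theorem mul_inv_section_mem_range (x : E) : x * (μ (q x))⁻¹ ∈ i.range :=
  (hker _).mp (by simp [hμ])

noncomputable def nPart (x : E) : N :=
  (mul_inv_section_mem_range hker hμ x).choose

theorem nPart_mul_section_apply (x : E) : i (nPart hker hμ x) * μ (q x) = x := by
  rw [nPart, (mul_inv_section_mem_range hker hμ x).choose_spec, inv_mul_cancel_right]

theorem exists_eq_mul_section (x : E) : ∃ n g, i n * μ g = x :=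
  ⟨_, _, nPart_mul_section_apply hker hμ x⟩

theorem map_mul_section (n : N) (g : G) : q (i n * μ g) = g := by
  rw [map_mul, map_inclusion_eq_one hker, hμ, one_mul]

theorem nPart_mul_section (hi : Function.Injective i) (n : N) (g : G) :
    nPart hker hμ (i n * μ g) = n := by
  apply hi
  have := nPart_mul_section_apply hker hμ (i n * μ g)
  rwa [map_mul_section hker hμ, mul_left_inj] at this

variable (α : N →* H) (ν : G → H)

noncomputable def liftFun (x : E) : H :=
  α (nPart hker hμ x) * ν (q x)

variable {α ν} (hi : Function.Injective i)
include hi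

theorem liftFun_mul_section (n : N) (g : G) :
    liftFun hker hμ α ν (i n * μ g) = α n * ν g := by
  rw [liftFun, nPart_mul_section hker hμ hi, map_mul_section hker hμ]

variable
  (hcocycle : ∀ (g g' : G) (m : N), i m = μ g * μ g' * (μ (g * g'))⁻¹ →
    α m = ν g * ν g' * (ν (g * g'))⁻¹)
  (hconj : ∀ (g : G) (n m : N), i m = μ g * i n * (μ g)⁻¹ →
    α m = ν g * α n * (ν g)⁻¹)
include hcocycle hconj

theorem liftFun_mul (x y : E) :
    liftFun hker hμ α ν (x * y) = liftFun hker hμ α ν x * liftFun hker hμ α ν y := by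
  obtain ⟨a, g, rfl⟩ := exists_eq_mul_section hker hμ x
  obtain ⟨b, g', rfl⟩ := exists_eq_mul_section hker hμ y
  obtain ⟨m, hm⟩ := conj_mem_range hker (μ g) b
  obtain ⟨c, hc⟩ := cocycle_mem_range hker hμ g g'
  have hprod : i a * μ g * (i b * μ g') = i (a * m * c) * μ (g * g') := by
    simp only [map_mul, hm, hc]
    group
  rw [hprod, liftFun_mul_section hker hμ hi, liftFun_mul_section hker hμ hi,
    liftFun_mul_section hker hμ hi, map_mul, map_mul, hconj g b m hm,
    hcocycle g g' c hc]
  group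

noncomputable def lift : E →* H :=
  MonoidHom.mk' (liftFun hker hμ α ν) (liftFun_mul hker hμ hi hcocycle hconj)

theorem lift_mul_section (n : N) (g : G) :
    lift hker hμ hi hcocycle hconj (i n * μ g) = α n * ν g :=
  liftFun_mul_section hker hμ hi n g

theorem lift_section (g : G) : lift hker hμ hi hcocycle hconj (μ g) = ν g := by
  simpa using lift_mul_section hker hμ hi hcocycle hconj 1 g

theorem lift_apply (n : N) : lift hker hμ hi hcocycle hconj (i n) = α n := by
  have := lift_mul_section hker hμ hi hcocycle hconj n 1
  rwa [map_mul, lift_section, mul_left_inj] at this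

end Sufficiency

include hker hμ in
theorem hom_ext_of_section {F F' : E →* H} (hFi : ∀ n, F (i n) = F' (i n))
    (hFμ : ∀ g, F (μ g) = F' (μ g)) : F = F' := by
  ext x
  obtain ⟨n, g, rfl⟩ := exists_eq_mul_section hker hμ x
  rw [map_mul, map_mul, hFi, hFμ]

end GroupExtensionLift

open GroupExtensionLift in
theorem stmt_14_general {Nn Gh G H : Type*} [Group Nn] [Group Gh] [Group G] [Group H]
    (i : Nn →* Gh) (q : Gh →* G) (hi : Function.Injective i)
    (hker : ∀ x : Gh, q x = 1 ↔ x ∈ i.range)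
    (α : Nn →* H)
    (μ : G → Gh) (hμ : ∀ g, q (μ g) = g)
    (ν : G → H) :
    (∃! F : Gh →* H, (∀ n, F (i n) = α n) ∧ ∀ g, F (μ g) = ν g) ↔
      ((∀ k ∈ Subgroup.closure ((α.range : Set H) ∪ Set.range ν),
          ∀ h ∈ α.range, k * h * k⁻¹ ∈ α.range) ∧
        (∀ (g g' : G) (m : Nn), i m = μ g * μ g' * (μ (g * g'))⁻¹ →
          α m = ν g * ν g' * (ν (g * g'))⁻¹) ∧
        (∀ (g : G) (n m : Nn), i m = μ g * i n * (μ g)⁻¹ →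
          α m = ν g * α n * (ν g)⁻¹)) := by
  constructor
  · rintro ⟨F, ⟨hFi, hFμ⟩, -⟩
    exact ⟨Subgroup.le_normalizer_iff.mp (closure_le_normalizer_range hker hFi hFμ),
      fun _ _ _ => map_cocycle_eq hFi hFμ, fun _ _ _ => map_conj_eq hFi hFμ⟩
  · rintro ⟨-, hcocycle, hconj⟩
    refine ⟨lift hker hμ hi hcocycle hconj,
      ⟨lift_apply hker hμ hi hcocycle hconj, lift_section hker hμ hi hcocycle hconj⟩, ?_⟩
    rintro F ⟨hFi, hFμ⟩
    exact hom_ext_of_section hker hμ (by simp [hFi, lift_apply]) (by simp [hFμ, lift_section])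

/-- given an extension `1 → N → Ĝ →^q G → 1`, a homomorphism `α : N → H`,
a normalized section `μ` of `q` and a normalized map `ν : G → H`, there is a (unique)
homomorphism `α̂ : Ĝ → H` with `α̂|_N = α` and `α̂ ∘ μ = ν` iff (i) `im(α)` is normal in the
subgroup generated by `im(α)` and `ν(G)`, (ii) `α ∘ δ_μ = δ_ν`, and (iii) `α` intertwines
the conjugation by `μ(g)` with conjugation by `ν(g)`. -/
theorem stmt_14 {Nn Gh G H : Type*} [Group Nn] [Group Gh] [Group G] [Group H]
    (i : Nn →* Gh) (q : Gh →* G) (hi : Function.Injective i)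
    (hq : Function.Surjective q) (hker : ∀ x : Gh, q x = 1 ↔ x ∈ i.range)
    (α : Nn →* H)
    (μ : G → Gh) (hμ : ∀ g, q (μ g) = g) (hμ1 : μ 1 = 1)
    (ν : G → H) (hν1 : ν 1 = 1) :
    (∃! F : Gh →* H, (∀ n, F (i n) = α n) ∧ ∀ g, F (μ g) = ν g) ↔
      ((∀ k ∈ Subgroup.closure ((α.range : Set H) ∪ Set.range ν),
          ∀ h ∈ α.range, k * h * k⁻¹ ∈ α.range) ∧
        (∀ (g g' : G) (m : Nn), i m = μ g * μ g' * (μ (g * g'))⁻¹ →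
          α m = ν g * ν g' * (ν (g * g'))⁻¹) ∧
        (∀ (g : G) (n m : Nn), i m = μ g * i n * (μ g)⁻¹ →
          α m = ν g * α n * (ν g)⁻¹)) :=
  stmt_14_general i q hi hker α μ hμ ν
end

section
/- Let (α : \hat{N} → G, \hat{S}) be a crossed module with N = im(α), Z = ker(α), and let (f, σ) be a structural cocycle, i.e., σ : G/N → G a normalized section of the quotient map q : G → G/N, f : G/N × G/N → \hat{N} normalized with α ∘ f = δ_σ and d_{\hat{S}∘σ} f = 1. Then the set \hat{N} × G/N with multiplication (n, h)(n', h') := (n · \hat{S}(σ(h))(n') · f(h,h'), hh') is a group, it is an extension of G/N by \hat{N}, and the map \hat{α}(n, h) := α(n) σ(h) is a group homomorphism to G satisfying \hat{α}|_{\hat{N}} = α and \hat{S} ∘ \hat{α} = C_{\hat{G}} (the conjugation action of the new group on \hat{N}). -/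
/-!
The key point is that `Ŝ ∘ σ` is multiplicative up to the inner automorphisms given by the
cocycle: `Ŝ(σ h) Ŝ(σ h') = c_{f(h,h')} Ŝ(σ (h h'))`, because `σ h σ h' = α(f(h,h')) σ(h h')`
and `Ŝ ∘ α = c`. With this, associativity of the twisted product is exactly the cocycle
identity `d f = 1`, and `α̂` is multiplicative by `α ∘ f = δ_σ` and `α ∘ Ŝ(g) = c_g ∘ α`.
Right inverses are explicit and are two-sided for formal reasons.
-/

theorem mul_inv_left_of_mul_inv_right {X : Type*} (m : X → X → X) (e : X) (inv : X → X)
    (assoc : ∀ x y z, m (m x y) z = m x (m y z))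
    (one_mul : ∀ x, m e x = x) (mul_one : ∀ x, m x e = x)
    (mul_inv : ∀ x, m x (inv x) = e) (x : X) :
    m (inv x) x = e :=
  calc m (inv x) x = m (m (inv x) x) (m (inv x) (inv (inv x))) := by rw [mul_inv, mul_one]
    _ = m (inv x) (m (m x (inv x)) (inv (inv x))) := by rw [assoc, assoc]
    _ = e := by rw [mul_inv, one_mul, mul_inv]

namespace CrossedModule

variable {N G Q : Type*} [Group N] [Group G] [Group Q]
  (α : N →* G) (S : G →* MulAut N) (σ : Q → G) (f : Q → Q → N)

def twistedMul (x y : N × Q) : N × Q :=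
  (x.1 * S (σ x.2) y.1 * f x.2 y.2, x.2 * y.2)

def twistedInv (x : N × Q) : N × Q :=
  ((S (σ x.2)).symm (x.1⁻¹ * (f x.2 x.2⁻¹)⁻¹), x.2⁻¹)

def twistedLift (x : N × Q) : G :=
  α x.1 * σ x.2

variable {α S σ f}

theorem map_section_mul_map_section
    (cm2 : ∀ y x : N, S (α y) x = y * x * y⁻¹)
    (hαf : ∀ h h', α (f h h') = σ h * σ h' * (σ (h * h'))⁻¹) (h h' : Q) :
    S (σ h) * S (σ h') = MulAut.conj (f h h') * S (σ (h * h')) := by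
  ext z
  have hσσ : σ h * σ h' = α (f h h') * σ (h * h') := by rw [hαf, inv_mul_cancel_right]
  rw [← map_mul, hσσ, map_mul, MulAut.mul_apply, MulAut.mul_apply, cm2, MulAut.conj_apply]

theorem twistedMul_assoc
    (cm2 : ∀ y x : N, S (α y) x = y * x * y⁻¹)
    (hαf : ∀ h h', α (f h h') = σ h * σ h' * (σ (h * h'))⁻¹)
    (hdf : ∀ h h' h'', S (σ h) (f h' h'') * f h (h' * h'') = f h h' * f (h * h') h'')
    (x y z : N × Q) :
    twistedMul S σ f (twistedMul S σ f x y) z = twistedMul S σ f x (twistedMul S σ f y z) := by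
  obtain ⟨n, h⟩ := x
  obtain ⟨n', h'⟩ := y
  obtain ⟨n'', h''⟩ := z
  have hSS := congrArg (· n'') (map_section_mul_map_section cm2 hαf h h')
  simp only [MulAut.mul_apply, MulAut.conj_apply] at hSS
  refine Prod.ext ?_ (mul_assoc h h' h'')
  calc n * S (σ h) n' * f h h' * S (σ (h * h')) n'' * f (h * h') h''
      = n * S (σ h) n' * (f h h' * S (σ (h * h')) n'' * (f h h')⁻¹)
          * (f h h' * f (h * h') h'') := by group
    _ = n * S (σ h) n' * S (σ h) (S (σ h') n'') * (S (σ h) (f h' h'') * f h (h' * h'')) := by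
          rw [← hSS, hdf]
    _ = n * S (σ h) (n' * S (σ h') n'' * f h' h'') * f h (h' * h'') := by
          simp only [map_mul]; group

theorem one_twistedMul (hσ1 : σ 1 = 1) (hf1 : ∀ h, f 1 h = 1) (x : N × Q) :
    twistedMul S σ f (1, 1) x = x := by
  simp [twistedMul, hσ1, hf1]

theorem twistedMul_one (hf1 : ∀ h, f h 1 = 1) (x : N × Q) :
    twistedMul S σ f x (1, 1) = x := by
  simp [twistedMul, hf1]

theorem twistedMul_twistedInv (x : N × Q) :
    twistedMul S σ f x (twistedInv S σ f x) = (1, 1) := by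
  refine Prod.ext ?_ (mul_inv_cancel x.2)
  simp [twistedMul, twistedInv]

theorem twistedLift_twistedMul
    (cm1 : ∀ (g : G) (x : N), α (S g x) = g * α x * g⁻¹)
    (hαf : ∀ h h', α (f h h') = σ h * σ h' * (σ (h * h'))⁻¹) (x y : N × Q) :
    twistedLift α σ (twistedMul S σ f x y) = twistedLift α σ x * twistedLift α σ y := by
  simp only [twistedLift, twistedMul, map_mul, cm1, hαf]
  group

theorem twistedMul_conj
    (cm2 : ∀ y x : N, S (α y) x = y * x * y⁻¹)
    (hσ1 : σ 1 = 1) (hf1l : ∀ h, f 1 h = 1) (hf1r : ∀ h, f h 1 = 1) (x : N × Q) (n : N) :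
    twistedMul S σ f x (n, 1) = twistedMul S σ f (S (twistedLift α σ x) n, 1) x := by
  refine Prod.ext ?_ (by simp [twistedMul])
  simp only [twistedMul, twistedLift, hσ1, hf1l, hf1r, map_one, MulAut.one_apply, mul_one, map_mul,
    MulAut.mul_apply, cm2]
  group

end CrossedModule

open CrossedModule in
theorem stmt_15_general {Nh G : Type*} [Group Nh] [Group G]
    (α : Nh →* G) (Sh : G →* MulAut Nh)
    (cm1 : ∀ (g : G) (x : Nh), α (Sh g x) = g * α x * g⁻¹)
    (cm2 : ∀ (y x : Nh), Sh (α y) x = y * x * y⁻¹)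
    [α.range.Normal]
    (σ : G ⧸ α.range → G)
    (hσ1 : σ 1 = 1)
    (f : G ⧸ α.range → G ⧸ α.range → Nh)
    (hf1 : ∀ h, f 1 h = 1 ∧ f h 1 = 1)
    (hαf : ∀ h h', α (f h h') = σ h * σ h' * (σ (h * h'))⁻¹)
    (hdf : ∀ h h' h'', Sh (σ h) (f h' h'') * f h (h' * h'') = f h h' * f (h * h') h'') :
    let m : Nh × (G ⧸ α.range) → Nh × (G ⧸ α.range) → Nh × (G ⧸ α.range) :=
      fun x y => (x.1 * Sh (σ x.2) y.1 * f x.2 y.2, x.2 * y.2)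
    let αh : Nh × (G ⧸ α.range) → G := fun x => α x.1 * σ x.2
    -- the multiplication is a group law
    (∀ x y z, m (m x y) z = m x (m y z)) ∧
    (∀ x, m (1, 1) x = x ∧ m x (1, 1) = x) ∧
    (∀ x, ∃ y, m x y = (1, 1) ∧ m y x = (1, 1)) ∧
    -- it is an extension of G/N by N̂
    (∀ x y, (m x y).2 = x.2 * y.2) ∧
    (∀ x : Nh × (G ⧸ α.range), x.2 = 1 ↔ ∃ nn : Nh, x = (nn, 1)) ∧
    -- α̂ is a homomorphism extending α with Ŝ ∘ α̂ = conjugation action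
    (∀ x y, αh (m x y) = αh x * αh y) ∧
    (∀ nn : Nh, αh (nn, 1) = α nn) ∧
    (∀ x (nn : Nh), m x (nn, 1) = m (Sh (αh x) nn, 1) x) := by
  intro m αh
  have hf1l h := (hf1 h).1
  have hf1r h := (hf1 h).2
  have assoc := twistedMul_assoc cm2 hαf hdf
  have one_mul := one_twistedMul (S := Sh) hσ1 hf1l
  have mul_one := twistedMul_one (S := Sh) (σ := σ) hf1r
  have inv_mul (x) : twistedMul Sh σ f (twistedInv Sh σ f x) x = (1, 1) :=
    mul_inv_left_of_mul_inv_right _ _ _ assoc one_mul mul_one twistedMul_twistedInv x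
  refine ⟨assoc, fun x => ⟨one_mul x, mul_one x⟩,
    fun x => ⟨_, twistedMul_twistedInv x, inv_mul x⟩, fun _ _ => rfl, fun x => ?_,
    twistedLift_twistedMul cm1 hαf, fun nn => by simp [αh, hσ1],
    twistedMul_conj cm2 hσ1 hf1l hf1r⟩
  exact ⟨fun hx => ⟨x.1, Prod.ext rfl hx⟩, by rintro ⟨nn, rfl⟩; rfl⟩

/-- given a crossed module `(α, Ŝ)` and a structural cocycle `(f, σ)`, the set
`N̂ × G/N` with multiplication `(n,h)(n',h') = (n · Ŝ(σ(h))(n') · f(h,h'), hh')` is a group,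
an extension of `G/N` by `N̂`, and `α̂(n,h) := α(n)σ(h)` is a homomorphism to `G` restricting
to `α` on `N̂` and satisfying `Ŝ ∘ α̂ = C_{Ĝ}`. -/
theorem stmt_15 {Nh G : Type*} [Group Nh] [Group G]
    (α : Nh →* G) (Sh : G →* MulAut Nh)
    (cm1 : ∀ (g : G) (x : Nh), α (Sh g x) = g * α x * g⁻¹)
    (cm2 : ∀ (y x : Nh), Sh (α y) x = y * x * y⁻¹)
    [α.range.Normal]
    (σ : G ⧸ α.range → G)
    (hσ : ∀ h, QuotientGroup.mk (σ h) = h) (hσ1 : σ 1 = 1)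
    (f : G ⧸ α.range → G ⧸ α.range → Nh)
    (hf1 : ∀ h, f 1 h = 1 ∧ f h 1 = 1)
    (hαf : ∀ h h', α (f h h') = σ h * σ h' * (σ (h * h'))⁻¹)
    (hdf : ∀ h h' h'', Sh (σ h) (f h' h'') * f h (h' * h'') = f h h' * f (h * h') h'') :
    let m : Nh × (G ⧸ α.range) → Nh × (G ⧸ α.range) → Nh × (G ⧸ α.range) :=
      fun x y => (x.1 * Sh (σ x.2) y.1 * f x.2 y.2, x.2 * y.2)
    let αh : Nh × (G ⧸ α.range) → G := fun x => α x.1 * σ x.2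
    -- the multiplication is a group law
    (∀ x y z, m (m x y) z = m x (m y z)) ∧
    (∀ x, m (1, 1) x = x ∧ m x (1, 1) = x) ∧
    (∀ x, ∃ y, m x y = (1, 1) ∧ m y x = (1, 1)) ∧
    -- it is an extension of G/N by N̂
    (∀ x y, (m x y).2 = x.2 * y.2) ∧
    (∀ x : Nh × (G ⧸ α.range), x.2 = 1 ↔ ∃ nn : Nh, x = (nn, 1)) ∧
    -- α̂ is a homomorphism extending α with Ŝ ∘ α̂ = conjugation action
    (∀ x y, αh (m x y) = αh x * αh y) ∧
    (∀ nn : Nh, αh (nn, 1) = α nn) ∧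
    (∀ x (nn : Nh), m x (nn, 1) = m (Sh (αh x) nn, 1) x) :=
  stmt_15_general α Sh cm1 cm2 σ hσ1 f hf1 hαf hdf
end

section
/- Let (α, \hat{S}) be a crossed module (abstract groups), and let (f, σ) and (f', σ') be two structural cocycles. The resulting extensions \hat{N} ×_{(f,σ)} G/N and \hat{N} ×_{(f',σ')} G/N are equivalent as extensions of the crossed module if and only if there exists a normalized map c : G/N → \hat{N} with f'(h,h') = c(h) · \hat{S}(σ(h))(c(h')) · f(h,h') · c(hh')^{-1} and σ'(h) = α(c(h)) · σ(h) for all h, h' ∈ G/N; in that case (n,h) ↦ (n·c(h), h) is an equivalence from \hat{N} ×_{(f',σ')} G/N to \hat{N} ×_{(f,σ)} G/N. -/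
/-!
An equivalence `φ` commutes with the structure maps, hence preserves the `G/N`-coordinate
(read off through `G → G/N`). As it also fixes `N̂ × {1}`, multiplicativity on
`(n, h) = (n, 1) · (1, h)` forces `φ (n, h) = (n · c h, h)` with `c h := (φ (1, h)).1`; comparing
`φ ((1, h) · (1, h'))` with `φ (1, h) · φ (1, h')`, and the structure maps at `(1, h)`, yields
exactly the relations between `(f, σ)` and `(f', σ')`. Conversely these relations make the shift
by `c` multiplicative, by the crossed module identity `Ŝ (α y) = conj y`.
-/

namespace CrossedModuleExt

variable {N G Q : Type*} [Group N] [Group G]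

-- `N × Q` with this multiplication is the extension `N̂ ×_{(f,σ)} Q` of the paper.
def mul [Mul Q] (S : G →* MulAut N) (σ : Q → G) (f : Q → Q → N) (x y : N × Q) : N × Q :=
  (x.1 * S (σ x.2) y.1 * f x.2 y.2, x.2 * y.2)

def structMap (α : N →* G) (σ : Q → G) (x : N × Q) : G := α x.1 * σ x.2

def shift (c : Q → N) (x : N × Q) : N × Q := (x.1 * c x.2, x.2)

def IsEquivalence [MulOneClass Q] (S : G →* MulAut N) (α : N →* G) (σ : Q → G)
    (f : Q → Q → N) (σ' : Q → G) (f' : Q → Q → N) (φ : N × Q → N × Q) : Prop :=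
  Function.Bijective φ ∧ (∀ x y, φ (mul S σ' f' x y) = mul S σ f (φ x) (φ y)) ∧
    (∀ n : N, φ (n, 1) = (n, 1)) ∧ ∀ x, structMap α σ (φ x) = structMap α σ' x

def ChangesCocycle [MulOneClass Q] (S : G →* MulAut N) (α : N →* G) (σ : Q → G)
    (f : Q → Q → N) (σ' : Q → G) (f' : Q → Q → N) (c : Q → N) : Prop :=
  c 1 = 1 ∧ (∀ h h', f' h h' = c h * S (σ h) (c h') * f h h' * (c (h * h'))⁻¹) ∧
    ∀ h, σ' h = α (c h) * σ h

theorem shift_bijective (c : Q → N) : Function.Bijective (shift c) :=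
  Function.bijective_iff_has_inverse.2
    ⟨shift (fun h => (c h)⁻¹), fun x => by simp [shift], fun x => by simp [shift]⟩

section Shift

variable {S : G →* MulAut N} {α : N →* G} {σ σ' : Q → G} {f f' : Q → Q → N} {c : Q → N}

theorem shift_mul [Mul Q] (cm2 : ∀ y x : N, S (α y) x = y * x * y⁻¹)
    (hcf : ∀ h h', f' h h' = c h * S (σ h) (c h') * f h h' * (c (h * h'))⁻¹)
    (hcσ : ∀ h, σ' h = α (c h) * σ h) (x y : N × Q) :
    shift c (mul S σ' f' x y) = mul S σ f (shift c x) (shift c y) := by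
  simp only [shift, mul, Prod.mk.injEq, and_true]
  rw [hcf, hcσ, map_mul, MulAut.mul_apply, cm2, map_mul]
  group

theorem structMap_shift (hcσ : ∀ h, σ' h = α (c h) * σ h) (x : N × Q) :
    structMap α σ (shift c x) = structMap α σ' x := by
  simp only [structMap, shift, hcσ, map_mul, mul_assoc]

theorem isEquivalence_shift [MulOneClass Q] (cm2 : ∀ y x : N, S (α y) x = y * x * y⁻¹)
    (hc : ChangesCocycle S α σ f σ' f' c) : IsEquivalence S α σ f σ' f' (shift c) := by
  obtain ⟨hc1, hcf, hcσ⟩ := hc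
  exact ⟨shift_bijective c, shift_mul cm2 hcf hcσ, fun n => by simp [shift, hc1],
    structMap_shift hcσ⟩

theorem changesCocycle_of_isEquivalence_shift [MulOneClass Q]
    (hc : IsEquivalence S α σ f σ' f' (shift c)) :
    ChangesCocycle S α σ f σ' f' c := by
  obtain ⟨-, hmul, hid, hα⟩ := hc
  refine ⟨?_, fun h h' => ?_, fun h => ?_⟩
  · simpa [shift] using hid 1
  · have := congrArg Prod.fst (hmul (1, h) (1, h'))
    simp only [shift, mul, map_one, one_mul, mul_one] at this
    rw [← this]
    group
  · simpa [structMap, shift] using (hα (1, h)).symm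

theorem eq_shift_of_map_mul [MulOneClass Q] (hσ1 : σ 1 = 1) (hf1 : ∀ h, f 1 h = 1)
    (hf'1 : ∀ h, f' 1 h = 1) {φ : N × Q → N × Q} (hmul : ∀ x y, φ (mul S σ' f' x y) = mul S σ f (φ x) (φ y))
    (hid : ∀ n : N, φ (n, 1) = (n, 1)) (hsnd : ∀ x, (φ x).2 = x.2) :
    φ = shift (fun h => (φ (1, h)).1) := by
  funext ⟨n, h⟩
  have hφ1 : φ (1, h) = ((φ (1, h)).1, h) := Prod.ext rfl (hsnd (1, h))
  have := hmul (n, 1) (1, h)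
  rw [hid, hφ1] at this
  simpa [mul, shift, hσ1, hf1, hf'1] using this

end Shift

section Quotient

variable {α : N →* G} [α.range.Normal] {σ : G ⧸ α.range → G}

theorem mk_structMap (hσ : ∀ h, (σ h : G ⧸ α.range) = h) (x : N × (G ⧸ α.range)) :
    (QuotientGroup.mk (structMap α σ x) : G ⧸ α.range) = x.2 := by
  have hα : ((α x.1 : G) : G ⧸ α.range) = 1 := (QuotientGroup.eq_one_iff _).2 ⟨x.1, rfl⟩
  rw [structMap, QuotientGroup.mk_mul, hα, one_mul, hσ]

theorem isEquivalence_iff_exists_changesCocycle {S : G →* MulAut N} {σ' : G ⧸ α.range → G}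
    {f f' : G ⧸ α.range → G ⧸ α.range → N} (cm2 : ∀ y x : N, S (α y) x = y * x * y⁻¹)
    (hσ : ∀ h, (σ h : G ⧸ α.range) = h) (hσ' : ∀ h, (σ' h : G ⧸ α.range) = h)
    (hσ1 : σ 1 = 1) (hf1 : ∀ h, f 1 h = 1) (hf'1 : ∀ h, f' 1 h = 1)
    (φ : N × (G ⧸ α.range) → N × (G ⧸ α.range)) :
    IsEquivalence S α σ f σ' f' φ ↔
      ∃ c, ChangesCocycle S α σ f σ' f' c ∧ φ = shift c := by
  refine ⟨fun hφ => ?_, fun ⟨c, hc, hφc⟩ => hφc ▸ isEquivalence_shift cm2 hc⟩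
  obtain ⟨-, hmul, hid, hα⟩ := id hφ
  have hsnd : ∀ x, (φ x).2 = x.2 := fun x => by
    rw [← mk_structMap hσ, hα, mk_structMap hσ']
  have hφc := eq_shift_of_map_mul hσ1 hf1 hf'1 hmul hid hsnd
  exact ⟨_, changesCocycle_of_isEquivalence_shift (hφc ▸ hφ), hφc⟩

end Quotient

end CrossedModuleExt

open CrossedModuleExt in
theorem stmt_16_general {Nh G : Type*} [Group Nh] [Group G]
    (α : Nh →* G) (Sh : G →* MulAut Nh)
    (cm2 : ∀ (y x : Nh), Sh (α y) x = y * x * y⁻¹)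
    [α.range.Normal]
    -- the structural cocycle (f, σ)
    (σ : G ⧸ α.range → G)
    (hσ : ∀ h, QuotientGroup.mk (σ h) = h) (hσ1 : σ 1 = 1)
    (f : G ⧸ α.range → G ⧸ α.range → Nh)
    (hf1 : ∀ h, f 1 h = 1 ∧ f h 1 = 1)
    -- the structural cocycle (f', σ')
    (σ' : G ⧸ α.range → G)
    (hσ' : ∀ h, QuotientGroup.mk (σ' h) = h)
    (f' : G ⧸ α.range → G ⧸ α.range → Nh)
    (hf'1 : ∀ h, f' 1 h = 1 ∧ f' h 1 = 1) :
    let Q := G ⧸ α.range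
    let m : Nh × Q → Nh × Q → Nh × Q :=
      fun x y => (x.1 * Sh (σ x.2) y.1 * f x.2 y.2, x.2 * y.2)
    let m' : Nh × Q → Nh × Q → Nh × Q :=
      fun x y => (x.1 * Sh (σ' x.2) y.1 * f' x.2 y.2, x.2 * y.2)
    let αh : Nh × Q → G := fun x => α x.1 * σ x.2
    let αh' : Nh × Q → G := fun x => α x.1 * σ' x.2
    let isEquiv : (Nh × Q → Nh × Q) → Prop := fun φ =>
      Function.Bijective φ ∧ (∀ x y, φ (m' x y) = m (φ x) (φ y)) ∧
        (∀ nn : Nh, φ (nn, 1) = (nn, 1)) ∧ (∀ x, αh (φ x) = αh' x)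
    let rel : (Q → Nh) → Prop := fun c =>
      c 1 = 1 ∧ (∀ h h', f' h h' = c h * Sh (σ h) (c h') * f h h' * (c (h * h'))⁻¹) ∧
        (∀ h, σ' h = α (c h) * σ h)
    -- the equivalence criterion
    ((∃ φ, isEquiv φ) ↔ ∃ c : Q → Nh, rel c) ∧
    -- in that case the explicit map is an equivalence ...
    (∀ c : Q → Nh, rel c → isEquiv (fun x => (x.1 * c x.2, x.2))) ∧
    -- ... and all equivalences are of this form
    (∀ φ, isEquiv φ → ∃ c : Q → Nh, rel c ∧ φ = fun x => (x.1 * c x.2, x.2)) := by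
  intro Q m m' αh αh' isEquiv rel
  have key : ∀ φ, isEquiv φ ↔ ∃ c, rel c ∧ φ = fun x => (x.1 * c x.2, x.2) :=
    isEquivalence_iff_exists_changesCocycle cm2 hσ hσ' hσ1 (fun h => (hf1 h).1)
      (fun h => (hf'1 h).1)
  have shift_isEquiv : ∀ c, rel c → isEquiv (fun x => (x.1 * c x.2, x.2)) :=
    fun c hc => (key _).2 ⟨c, hc, rfl⟩
  refine ⟨⟨fun ⟨φ, hφ⟩ => ?_, fun ⟨c, hc⟩ => ⟨_, shift_isEquiv c hc⟩⟩, shift_isEquiv,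
    fun φ => (key φ).1⟩
  obtain ⟨c, hc, -⟩ := (key φ).1 hφ
  exact ⟨c, hc⟩

/-- for two structural cocycles `(f,σ)` and `(f',σ')` of a crossed module
`(α, Ŝ)`, the extensions `N̂ ×_{(f,σ)} G/N` and `N̂ ×_{(f',σ')} G/N` are equivalent (as
extensions of the crossed module) iff there is a normalized `c : G/N → N̂` with
`f'(h,h') = c(h) · Ŝ(σ(h))(c(h')) · f(h,h') · c(hh')⁻¹` and `σ'(h) = α(c(h)) · σ(h)`;
in that case `(n,h) ↦ (n·c(h), h)` is an equivalence, and all equivalences are of this form. -/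
theorem stmt_16 {Nh G : Type*} [Group Nh] [Group G]
    (α : Nh →* G) (Sh : G →* MulAut Nh)
    (cm1 : ∀ (g : G) (x : Nh), α (Sh g x) = g * α x * g⁻¹)
    (cm2 : ∀ (y x : Nh), Sh (α y) x = y * x * y⁻¹)
    [α.range.Normal]
    -- the structural cocycle (f, σ)
    (σ : G ⧸ α.range → G)
    (hσ : ∀ h, QuotientGroup.mk (σ h) = h) (hσ1 : σ 1 = 1)
    (f : G ⧸ α.range → G ⧸ α.range → Nh)
    (hf1 : ∀ h, f 1 h = 1 ∧ f h 1 = 1)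
    (hαf : ∀ h h', α (f h h') = σ h * σ h' * (σ (h * h'))⁻¹)
    (hdf : ∀ h h' h'', Sh (σ h) (f h' h'') * f h (h' * h'') = f h h' * f (h * h') h'')
    -- the structural cocycle (f', σ')
    (σ' : G ⧸ α.range → G)
    (hσ' : ∀ h, QuotientGroup.mk (σ' h) = h) (hσ'1 : σ' 1 = 1)
    (f' : G ⧸ α.range → G ⧸ α.range → Nh)
    (hf'1 : ∀ h, f' 1 h = 1 ∧ f' h 1 = 1)
    (hαf' : ∀ h h', α (f' h h') = σ' h * σ' h' * (σ' (h * h'))⁻¹)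
    (hdf' : ∀ h h' h'', Sh (σ' h) (f' h' h'') * f' h (h' * h'') = f' h h' * f' (h * h') h'') :
    let Q := G ⧸ α.range
    let m : Nh × Q → Nh × Q → Nh × Q :=
      fun x y => (x.1 * Sh (σ x.2) y.1 * f x.2 y.2, x.2 * y.2)
    let m' : Nh × Q → Nh × Q → Nh × Q :=
      fun x y => (x.1 * Sh (σ' x.2) y.1 * f' x.2 y.2, x.2 * y.2)
    let αh : Nh × Q → G := fun x => α x.1 * σ x.2
    let αh' : Nh × Q → G := fun x => α x.1 * σ' x.2
    let isEquiv : (Nh × Q → Nh × Q) → Prop := fun φ =>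
      Function.Bijective φ ∧ (∀ x y, φ (m' x y) = m (φ x) (φ y)) ∧
        (∀ nn : Nh, φ (nn, 1) = (nn, 1)) ∧ (∀ x, αh (φ x) = αh' x)
    let rel : (Q → Nh) → Prop := fun c =>
      c 1 = 1 ∧ (∀ h h', f' h h' = c h * Sh (σ h) (c h') * f h h' * (c (h * h'))⁻¹) ∧
        (∀ h, σ' h = α (c h) * σ h)
    -- the equivalence criterion
    ((∃ φ, isEquiv φ) ↔ ∃ c : Q → Nh, rel c) ∧
    -- in that case the explicit map is an equivalence ...
    (∀ c : Q → Nh, rel c → isEquiv (fun x => (x.1 * c x.2, x.2))) ∧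
    -- ... and all equivalences are of this form
    (∀ φ, isEquiv φ → ∃ c : Q → Nh, rel c ∧ φ = fun x => (x.1 * c x.2, x.2)) :=
  stmt_16_general α Sh cm2 σ hσ hσ1 f hf1 σ' hσ' f' hf'1
end

section
/- Let (α, \hat{S}) be a crossed module with Z = ker(α) and fixed structural cocycle (f, σ). If (f'', σ) is another structural cocycle with the same section σ, then β := f^{-1}·f'' takes values in Z and is a 2-cocycle in Z^2(G/N, Z) for the induced G/N-action T on Z. Moreover, the extensions associated to (f,σ) and (f'',σ) are equivalent as crossed-module extensions if and only if β is a coboundary, i.e., β = d_T c for some normalized c : G/N → Z. -/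
/-!
Since `α ∘ f = α ∘ f'' = δ_σ`, the quotient `β = f⁻¹ f''` lies in `ker α`, which is central
because `α y` acts on `N̂` as conjugation by `y`; centrality lets the two cocycle identities be
divided. Normalization of `f` and `f''` forces an equivalence of the twisted products
`N̂ × G/N` that fixes `N̂` and respects `α̂` to be a shear `(n, q) ↦ (n * c q, q)` with `c` valued
in `ker α`, and such a shear is multiplicative exactly when `β = d_T c`.
-/

open Subgroup

theorem ker_le_center_of_conj {N G : Type*} [Group N] [Group G] {α : N →* G}
    {S : G →* MulAut N} (hS : ∀ y x, S (α y) x = y * x * y⁻¹) : α.ker ≤ center N := by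
  intro z hz
  rw [mem_center_iff]
  intro g
  have hconj := hS z g
  rw [MonoidHom.mem_ker.mp hz, map_one, MulAut.one_apply] at hconj
  exact (mul_inv_eq_iff_eq_mul.mp hconj.symm).symm

theorem QuotientGroup.mk_map_mul_of_section {N G : Type*} [Group N] [Group G] {α : N →* G}
    [α.range.Normal] {σ : G ⧸ α.range → G} (hσ : ∀ q, (σ q : G ⧸ α.range) = q)
    (n : N) (q : G ⧸ α.range) : ((α n * σ q : G) : G ⧸ α.range) = q := by
  rw [QuotientGroup.mk_mul, (QuotientGroup.eq_one_iff (α n)).mpr (MonoidHom.mem_range.mpr ⟨n, rfl⟩),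
    one_mul, hσ]

section TwistedProduct

variable {M Q : Type*} [Group M]

def IsTwistedCocycle [Mul Q] (s : Q → MulAut M) (f : Q → Q → M) : Prop :=
  ∀ h h' h'', s h (f h' h'') * f h (h' * h'') = f h h' * f (h * h') h''

theorem IsTwistedCocycle.inv_mul [Mul Q] {s : Q → MulAut M} {f f' : Q → Q → M}
    (hf : IsTwistedCocycle s f) (hf' : IsTwistedCocycle s f')
    (hcen : ∀ h h', (f h h')⁻¹ * f' h h' ∈ center M) :
    IsTwistedCocycle s fun h h' => (f h h')⁻¹ * f' h h' := by
  intro h h' h''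
  set β : Q → Q → M := fun h h' => (f h h')⁻¹ * f' h h'
  have hf'_eq : ∀ h h', f' h h' = f h h' * β h h' := fun h h' => (mul_inv_cancel_left _ _).symm
  have key := hf' h h' h''
  rw [hf'_eq, hf'_eq, hf'_eq, hf'_eq, map_mul,
    ((MulEquivClass.apply_mem_center (s h) (hcen h' h'')).comm _).mul_mul_mul_comm,
    ((hcen h h').comm _).mul_mul_mul_comm, hf h h' h''] at key
  exact mul_left_cancel key

def twistedMul [Mul Q] (s : Q → MulAut M) (f : Q → Q → M) (x y : M × Q) : M × Q :=
  (x.1 * s x.2 y.1 * f x.2 y.2, x.2 * y.2)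

def shearEquiv (c : Q → M) : M × Q ≃ M × Q where
  toFun x := (x.1 * c x.2, x.2)
  invFun x := (x.1 * (c x.2)⁻¹, x.2)
  left_inv x := by simp
  right_inv x := by simp

@[simp]
theorem shearEquiv_apply (c : Q → M) (x : M × Q) : shearEquiv c x = (x.1 * c x.2, x.2) := rfl

theorem twistedMul_one_left [MulOneClass Q] {s : Q → MulAut M} {f : Q → Q → M}
    (hs : s 1 = 1) (hf : ∀ h, f 1 h = 1) (n : M) (y : M × Q) :
    twistedMul s f (n, 1) y = (n * y.1, y.2) := by
  simp [twistedMul, hs, hf]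

theorem eq_shearEquiv_of_map_twistedMul [MulOneClass Q] {s : Q → MulAut M} {f f' : Q → Q → M}
    (hs : s 1 = 1) (hf : ∀ h, f 1 h = 1) (hf' : ∀ h, f' 1 h = 1) {φ : M × Q → M × Q}
    (hφ : ∀ x y, φ (twistedMul s f' x y) = twistedMul s f (φ x) (φ y))
    (hφ_fst : ∀ n, φ (n, 1) = (n, 1)) (hφ_snd : ∀ x, (φ x).2 = x.2) :
    φ = shearEquiv fun q => (φ (1, q)).1 := by
  funext ⟨n, q⟩
  calc φ (n, q) = φ (twistedMul s f' (n, 1) (1, q)) := by rw [twistedMul_one_left hs hf']; simp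
    _ = (n * (φ (1, q)).1, q) := by rw [hφ, hφ_fst, twistedMul_one_left hs hf, hφ_snd]

theorem shearEquiv_map_twistedMul_iff [Mul Q] {s : Q → MulAut M} {f f' : Q → Q → M}
    {c : Q → M} (hc : ∀ q, c q ∈ center M) :
    (∀ x y, shearEquiv c (twistedMul s f' x y) =
      twistedMul s f (shearEquiv c x) (shearEquiv c y)) ↔
      ∀ h h', (f h h')⁻¹ * f' h h' = s h (c h') * (c (h * h'))⁻¹ * c h := by
  have hsc : ∀ h h', s h (c h') ∈ center M := fun h h' => MulEquivClass.apply_mem_center _ (hc h')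
  have key : ∀ h h', f' h h' * c (h * h') = c h * s h (c h') * f h h' ↔
      (f h h')⁻¹ * f' h h' = s h (c h') * (c (h * h'))⁻¹ * c h := by
    intro h h'
    have hX : c h * s h (c h') ∈ center M := mul_mem (hc h) (hsc h h')
    obtain ⟨β, hβ⟩ : ∃ β, f' h h' = f h h' * β := ⟨_, (mul_inv_cancel_left _ _).symm⟩
    rw [hβ, inv_mul_cancel_left, (hX.comm _).eq, mul_assoc, mul_left_cancel_iff,
      ← eq_mul_inv_iff_mul_eq, mul_assoc, ← ((hc h).comm _).eq]
  have hfst : ∀ a b h h',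
      a * s h b * f' h h' * c (h * h') = a * c h * (s h b * s h (c h')) * f h h' ↔
      f' h h' * c (h * h') = c h * s h (c h') * f h h' := by
    intro a b h h'
    simp only [mul_assoc]
    rw [((hc h).comm _).left_comm, mul_right_inj, mul_right_inj]
  simp only [shearEquiv_apply, twistedMul, Prod.ext_iff, and_true, Prod.forall, map_mul, hfst, key]
  exact ⟨fun H h h' => H 1 h 1 h', fun H _ h _ h' => H h h'⟩

end TwistedProduct

theorem stmt_17_general {Nh G : Type*} [Group Nh] [Group G]
    (α : Nh →* G) (Sh : G →* MulAut Nh)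
    (cm2 : ∀ (y x : Nh), Sh (α y) x = y * x * y⁻¹)
    [α.range.Normal]
    -- the common section σ
    (σ : G ⧸ α.range → G)
    (hσ : ∀ h, QuotientGroup.mk (σ h) = h) (hσ1 : σ 1 = 1)
    -- the structural cocycle (f, σ)
    (f : G ⧸ α.range → G ⧸ α.range → Nh)
    (hf1 : ∀ h, f 1 h = 1 ∧ f h 1 = 1)
    (hαf : ∀ h h', α (f h h') = σ h * σ h' * (σ (h * h'))⁻¹)
    (hdf : ∀ h h' h'', Sh (σ h) (f h' h'') * f h (h' * h'') = f h h' * f (h * h') h'')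
    -- the structural cocycle (f'', σ)
    (f'' : G ⧸ α.range → G ⧸ α.range → Nh)
    (hf''1 : ∀ h, f'' 1 h = 1 ∧ f'' h 1 = 1)
    (hαf'' : ∀ h h', α (f'' h h') = σ h * σ h' * (σ (h * h'))⁻¹)
    (hdf'' : ∀ h h' h'', Sh (σ h) (f'' h' h'') * f'' h (h' * h'') =
      f'' h h' * f'' (h * h') h'') :
    let Q := G ⧸ α.range
    let β : Q → Q → Nh := fun h h' => (f h h')⁻¹ * f'' h h'
    let m : Nh × Q → Nh × Q → Nh × Q :=
      fun x y => (x.1 * Sh (σ x.2) y.1 * f x.2 y.2, x.2 * y.2)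
    let m'' : Nh × Q → Nh × Q → Nh × Q :=
      fun x y => (x.1 * Sh (σ x.2) y.1 * f'' x.2 y.2, x.2 * y.2)
    let αh : Nh × Q → G := fun x => α x.1 * σ x.2
    let isEquiv : (Nh × Q → Nh × Q) → Prop := fun φ =>
      Function.Bijective φ ∧ (∀ x y, φ (m'' x y) = m (φ x) (φ y)) ∧
        (∀ nn : Nh, φ (nn, 1) = (nn, 1)) ∧ (∀ x, αh (φ x) = αh x)
    -- β takes values in Z = ker α
    (∀ h h', β h h' ∈ α.ker) ∧
    -- β is a 2-cocycle for the induced action T([g]) = Ŝ(g) on Z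
    (∀ h h' h'', Sh (σ h) (β h' h'') * β h (h' * h'') = β h h' * β (h * h') h'') ∧
    -- the extensions are equivalent iff β is a coboundary d_T c
    ((∃ φ, isEquiv φ) ↔
      ∃ c : Q → Nh, (∀ h, c h ∈ α.ker) ∧ c 1 = 1 ∧
        ∀ h h', β h h' = Sh (σ h) (c h') * (c (h * h'))⁻¹ * c h) := by
  intro Q β m m'' αh isEquiv
  have hβ_ker : ∀ h h', β h h' ∈ α.ker := fun h h' => by
    simp only [β, MonoidHom.mem_ker, map_mul, map_inv, hαf, hαf'']
    group
  have hker := ker_le_center_of_conj cm2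
  refine ⟨hβ_ker, IsTwistedCocycle.inv_mul (s := fun q => Sh (σ q)) hdf hdf''
    fun h h' => hker (hβ_ker h h'), ⟨?_, ?_⟩⟩
  · rintro ⟨φ, -, hφ, hφ_fst, hφ_α⟩
    have hφ_snd : ∀ x, (φ x).2 = x.2 := fun x => by
      simpa [αh, QuotientGroup.mk_map_mul_of_section hσ] using
        congrArg (QuotientGroup.mk (s := α.range)) (hφ_α x)
    have hc : ∀ q, (φ (1, q)).1 ∈ α.ker := fun q => by
      simpa [αh, hφ_snd] using hφ_α (1, q)
    have hφ_eq := eq_shearEquiv_of_map_twistedMul (s := fun q => Sh (σ q)) (by simp [hσ1])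
      (fun h => (hf1 h).1) (fun h => (hf''1 h).1) hφ hφ_fst hφ_snd
    refine ⟨_, hc, by simpa using congrArg Prod.fst (hφ_fst 1),
      (shearEquiv_map_twistedMul_iff fun q => hker (hc q)).mp ?_⟩
    rwa [← hφ_eq]
  · rintro ⟨c, hc, hc1, hcob⟩
    refine ⟨shearEquiv c, (shearEquiv c).bijective,
      (shearEquiv_map_twistedMul_iff fun q => hker (hc q)).mpr hcob, fun n => by simp [hc1],
      fun x => by simp [αh, MonoidHom.mem_ker.mp (hc x.2)]⟩

/-- for two structural cocycles `(f,σ)` and `(f'',σ)` with the same section,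
`β := f⁻¹·f''` takes values in `Z = ker(α)` and is a 2-cocycle for the induced `G/N`-action
`T` on `Z`; the two extensions are equivalent as crossed-module extensions iff `β` is a
coboundary `d_T c` for some normalized `c : G/N → Z`. -/
theorem stmt_17 {Nh G : Type*} [Group Nh] [Group G]
    (α : Nh →* G) (Sh : G →* MulAut Nh)
    (cm1 : ∀ (g : G) (x : Nh), α (Sh g x) = g * α x * g⁻¹)
    (cm2 : ∀ (y x : Nh), Sh (α y) x = y * x * y⁻¹)
    [α.range.Normal]
    -- the common section σ
    (σ : G ⧸ α.range → G)
    (hσ : ∀ h, QuotientGroup.mk (σ h) = h) (hσ1 : σ 1 = 1)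
    -- the structural cocycle (f, σ)
    (f : G ⧸ α.range → G ⧸ α.range → Nh)
    (hf1 : ∀ h, f 1 h = 1 ∧ f h 1 = 1)
    (hαf : ∀ h h', α (f h h') = σ h * σ h' * (σ (h * h'))⁻¹)
    (hdf : ∀ h h' h'', Sh (σ h) (f h' h'') * f h (h' * h'') = f h h' * f (h * h') h'')
    -- the structural cocycle (f'', σ)
    (f'' : G ⧸ α.range → G ⧸ α.range → Nh)
    (hf''1 : ∀ h, f'' 1 h = 1 ∧ f'' h 1 = 1)
    (hαf'' : ∀ h h', α (f'' h h') = σ h * σ h' * (σ (h * h'))⁻¹)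
    (hdf'' : ∀ h h' h'', Sh (σ h) (f'' h' h'') * f'' h (h' * h'') =
      f'' h h' * f'' (h * h') h'') :
    let Q := G ⧸ α.range
    let β : Q → Q → Nh := fun h h' => (f h h')⁻¹ * f'' h h'
    let m : Nh × Q → Nh × Q → Nh × Q :=
      fun x y => (x.1 * Sh (σ x.2) y.1 * f x.2 y.2, x.2 * y.2)
    let m'' : Nh × Q → Nh × Q → Nh × Q :=
      fun x y => (x.1 * Sh (σ x.2) y.1 * f'' x.2 y.2, x.2 * y.2)
    let αh : Nh × Q → G := fun x => α x.1 * σ x.2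
    let isEquiv : (Nh × Q → Nh × Q) → Prop := fun φ =>
      Function.Bijective φ ∧ (∀ x y, φ (m'' x y) = m (φ x) (φ y)) ∧
        (∀ nn : Nh, φ (nn, 1) = (nn, 1)) ∧ (∀ x, αh (φ x) = αh x)
    -- β takes values in Z = ker α
    (∀ h h', β h h' ∈ α.ker) ∧
    -- β is a 2-cocycle for the induced action T([g]) = Ŝ(g) on Z
    (∀ h h' h'', Sh (σ h) (β h' h'') * β h (h' * h'') = β h h' * β (h * h') h'') ∧
    -- the extensions are equivalent iff β is a coboundary d_T c
    ((∃ φ, isEquiv φ) ↔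
      ∃ c : Q → Nh, (∀ h, c h ∈ α.ker) ∧ c 1 = 1 ∧
        ∀ h h', β h h' = Sh (σ h) (c h') * (c (h * h'))⁻¹ * c h) :=
  stmt_17_general α Sh cm2 σ hσ hσ1 f hf1 hαf hdf f'' hf''1 hαf'' hdf''
end
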